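/- arXiv:1812.09482 — 3 statements merged into one kernel-verified Lean document; each statement's English description precedes it below -/
import Mathlib

section
/- Let a and b be coprime natural numbers and t a natural number such that t divides a²+1, and assume gcd(b,t)=1. Let a* be an integer with a·a* ≡ 1 (mod b) and b* an integer with b·b* ≡ 1 (mod a). Then S(t·a*, b) + S(t·b*, a) = (a² + b² + t²)/(t·a·b) − 3 + S(a·b, t). -/
/-- The sawtooth function `((x))`: `x - ⌊x⌋ - 1/2` if `x ∉ ℤ`, and `0` if `x ∈ ℤ`. -/
noncomputable def saw (x : ℝ) : ℝ := if Int.fract x = 0 then 0 else x - ⌊x⌋ - 1/2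

/-- The classical Dedekind sum `s(a,b) = ∑_{k=1}^b ((k/b)) ((a k / b))`. -/
noncomputable def dedekindSum (a : ℤ) (b : ℕ) : ℝ :=
  ∑ k ∈ Finset.Icc 1 b, saw ((k : ℝ) / b) * saw ((a : ℝ) * k / b)

/-- The normalized Dedekind sum `S(a,b) = 12 s(a,b)`. -/
noncomputable def S (a : ℤ) (b : ℕ) : ℝ := 12 * dedekindSum a b

namespace DedAux
open Finset

lemma sum_id (n : ℕ) : 2 * ∑ k ∈ Icc 1 n, k = n^2 + n := by
  induction n with
  | zero => simp
  | succ m ih =>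
    rw [Finset.sum_Icc_succ_top (by omega)]
    have h2 : (m+1)^2 = m^2 + 2*m + 1 := by ring
    omega

/-- generic reindexing along `k ↦ (u*k) % c` -/
lemma bij {M : Type*} [AddCommMonoid M] {u c : ℕ} (hco : Nat.Coprime u c) (f : ℕ → M) :
    ∑ k ∈ Icc 1 (c-1), f ((u*k) % c) = ∑ k ∈ Icc 1 (c-1), f k := by
  rcases Nat.lt_or_ge c 2 with hc | hc
  · interval_cases c <;> simp
  have hc0 : 0 < c := by omega
  have hmem : ∀ k ∈ Icc 1 (c-1), (u*k) % c ∈ Icc 1 (c-1) := by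
    intro k hk
    simp only [mem_Icc] at hk ⊢
    have hlt : (u*k) % c < c := Nat.mod_lt _ hc0
    have hne : (u*k) % c ≠ 0 := by
      intro h0
      have hdvd : c ∣ u * k := Nat.dvd_of_mod_eq_zero h0
      have : c ∣ k := (Nat.Coprime.dvd_of_dvd_mul_left (Nat.coprime_comm.mp hco) hdvd)
      have := Nat.le_of_dvd (by omega) this
      omega
    omega
  have hinj : ∀ k₁ ∈ Icc 1 (c-1), ∀ k₂ ∈ Icc 1 (c-1),
      (u*k₁) % c = (u*k₂) % c → k₁ = k₂ := by
    intro k₁ hk₁ k₂ hk₂ h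
    simp only [mem_Icc] at hk₁ hk₂
    have hmod : k₁ ≡ k₂ [MOD c] :=
      Nat.ModEq.cancel_left_of_coprime (by rwa [Nat.coprime_comm] at hco) h
    have hmm : k₁ % c = k₂ % c := hmod
    rwa [Nat.mod_eq_of_lt (by omega), Nat.mod_eq_of_lt (by omega)] at hmm
  refine Finset.sum_bij (fun k _ => (u*k) % c) hmem (fun a₁ h₁ a₂ h₂ h => hinj a₁ h₁ a₂ h₂ h) ?_ (fun a _ => rfl)
  · intro b hb
    obtain ⟨a, ha, hab⟩ := Finset.surj_on_of_inj_on_of_card_le (fun k _ => (u*k) % c) hmem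
      (fun a₁ a₂ h₁ h₂ h => hinj a₁ h₁ a₂ h₂ h) le_rfl b hb
    exact ⟨a, ha, hab.symm⟩

/-- key filter identity -/
lemma filt {m w x : ℕ} (hco : Nat.Coprime w m) (hx1 : 1 ≤ x) (hx2 : x ≤ m - 1) :
    (Icc 1 (w-1)).filter (fun i => m*i < w*x) = Icc 1 (w*x/m) := by
  have hm0 : 0 < m := by omega
  rcases Nat.eq_zero_or_pos w with hw | hw
  · subst hw
    rw [Nat.zero_mul, Nat.zero_div, show (0:ℕ)-1 = 0 from rfl,
      Finset.Icc_eq_empty (by omega)]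
    simp
  ext i
  simp only [mem_filter, mem_Icc]
  constructor
  · rintro ⟨⟨h1, h2⟩, h3⟩
    refine ⟨h1, (Nat.le_div_iff_mul_le hm0).2 ?_⟩
    calc i * m = m * i := mul_comm _ _
      _ ≤ w * x := le_of_lt h3
  · rintro ⟨h1, h2⟩
    have hle : m * i ≤ w * x := by
      rw [mul_comm]; exact (Nat.le_div_iff_mul_le hm0).1 h2
    have hne : m * i ≠ w * x := by
      intro he
      have hdvd : m ∣ w * x := ⟨i, he.symm⟩
      have : m ∣ x := Nat.Coprime.dvd_of_dvd_mul_left (Nat.coprime_comm.mp hco) hdvd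
      have := Nat.le_of_dvd (by omega) this
      omega
    have hlt : m * i < w * x := lt_of_le_of_ne hle hne
    have hxm : x < m := by omega
    have hub : w * x / m < w := by
      rw [Nat.div_lt_iff_lt_mul hm0]
      exact mul_lt_mul_of_pos_left hxm hw
    exact ⟨⟨h1, by omega⟩, hlt⟩

def Tc (u c : ℕ) : ℕ := ∑ k ∈ Icc 1 (c-1), k * (u*k/c)
def Qc (u c : ℕ) : ℕ := ∑ k ∈ Icc 1 (c-1), k * ((u*k) % c)
def Fcnt (u v c : ℕ) : ℕ := ∑ k ∈ Icc 1 (c-1), (u*k/c) * (v*k/c)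
def Pc (u v c : ℕ) : ℕ := ∑ k ∈ Icc 1 (c-1), ((u*k) % c) * ((v*k) % c)

/-- R4 -/
lemma hR4 (u c : ℕ) : Qc u c + c * Tc u c = u * ∑ k ∈ Icc 1 (c-1), k^2 := by
  unfold Qc Tc
  rw [Finset.mul_sum, Finset.mul_sum, ← Finset.sum_add_distrib]
  refine Finset.sum_congr rfl fun k _ => ?_
  calc k*((u*k)%c) + c*(k*(u*k/c)) = (c*(u*k/c) + (u*k)%c)*k := by ring
    _ = (u*k)*k := by rw [Nat.div_add_mod]
    _ = u*k^2 := by ring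

/-- R1 -/
lemma hR1 {u c : ℕ} (hco : Nat.Coprime u c) :
    2 * Tc u c + ∑ i ∈ Icc 1 (u-1), ((c*i/u)^2 + (c*i/u))
      = 2*(u-1) * ∑ k ∈ Icc 1 (c-1), k := by
  have step1 : Tc u c = ∑ k ∈ Icc 1 (c-1), ∑ i ∈ Icc 1 (u-1),
      (if c*i < u*k then k else 0) := by
    unfold Tc
    refine Finset.sum_congr rfl fun k hk => ?_
    simp only [mem_Icc] at hk
    rw [← Finset.sum_filter, filt hco hk.1 hk.2, Finset.sum_const, Nat.card_Icc]
    simp [mul_comm]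
  rw [step1, Finset.sum_comm]
  have step2 : ∀ i ∈ Icc 1 (u-1),
      2 * (∑ k ∈ Icc 1 (c-1), if c*i < u*k then k else 0) + ((c*i/u)^2 + (c*i/u))
        = 2 * ∑ k ∈ Icc 1 (c-1), k := by
    intro i hi
    simp only [mem_Icc] at hi
    have hsplit := Finset.sum_filter_add_sum_filter_not (Icc 1 (c-1))
      (fun k => c*i < u*k) (fun k => k)
    have hnotfilt : (Icc 1 (c-1)).filter (fun k => ¬ (c*i < u*k))
        = (Icc 1 (c-1)).filter (fun k => u*k < c*i) := by
      refine Finset.filter_congr fun k hk => ?_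
      simp only [mem_Icc] at hk
      have hne : u*k ≠ c*i := by
        intro he
        have hdvd : u ∣ c * i := ⟨k, he.symm⟩
        have : u ∣ i := Nat.Coprime.dvd_of_dvd_mul_left hco hdvd
        have := Nat.le_of_dvd (by omega) this
        omega
      omega
    have hfilt2 : (Icc 1 (c-1)).filter (fun k => u*k < c*i) = Icc 1 (c*i/u) :=
      filt (m := u) (w := c) (x := i) (Nat.coprime_comm.mp hco) hi.1 hi.2
    have hgauss := sum_id (c*i/u)
    rw [hnotfilt, hfilt2] at hsplit
    rw [← Finset.sum_filter]
    omega
  calc 2 * ∑ i ∈ Icc 1 (u-1), (∑ k ∈ Icc 1 (c-1), if c*i < u*k then k else 0)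
        + ∑ i ∈ Icc 1 (u-1), ((c*i/u)^2 + (c*i/u))
      = ∑ i ∈ Icc 1 (u-1), (2 * (∑ k ∈ Icc 1 (c-1), if c*i < u*k then k else 0)
          + ((c*i/u)^2 + (c*i/u))) := by
        rw [Finset.mul_sum, ← Finset.sum_add_distrib]
    _ = ∑ i ∈ Icc 1 (u-1), 2 * ∑ k ∈ Icc 1 (c-1), k := Finset.sum_congr rfl step2
    _ = 2*(u-1) * ∑ k ∈ Icc 1 (c-1), k := by
        rw [Finset.sum_const, Nat.card_Icc]
        simp
        ring

/-- R2 -/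
lemma hR2 {u c : ℕ} (hco : Nat.Coprime c u) :
    u * (∑ i ∈ Icc 1 (u-1), c*i/u) + ∑ i ∈ Icc 1 (u-1), i
      = c * ∑ i ∈ Icc 1 (u-1), i := by
  have hb := bij (M := ℕ) hco (fun n => n)
  calc u * (∑ i ∈ Icc 1 (u-1), c*i/u) + ∑ i ∈ Icc 1 (u-1), i
      = (∑ i ∈ Icc 1 (u-1), u*(c*i/u)) + ∑ i ∈ Icc 1 (u-1), (c*i) % u := by
        rw [Finset.mul_sum, hb]
    _ = ∑ i ∈ Icc 1 (u-1), (u*(c*i/u) + (c*i) % u) := by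
        rw [Finset.sum_add_distrib]
    _ = ∑ i ∈ Icc 1 (u-1), c*i := by
        refine Finset.sum_congr rfl fun i _ => ?_
        exact Nat.div_add_mod (c*i) u
    _ = c * ∑ i ∈ Icc 1 (u-1), i := by rw [Finset.mul_sum]

/-- R3 -/
lemma hR3 {u c : ℕ} (hco : Nat.Coprime c u) :
    u^2 * (∑ i ∈ Icc 1 (u-1), (c*i/u)^2) + 2*c*(Qc c u)
      = c^2 * (∑ i ∈ Icc 1 (u-1), i^2) + ∑ i ∈ Icc 1 (u-1), i^2 := by
  have hb := bij (M := ℕ) hco (fun n => n^2)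
  unfold Qc
  calc u^2 * (∑ i ∈ Icc 1 (u-1), (c*i/u)^2) + 2*c*(∑ i ∈ Icc 1 (u-1), i * ((c*i) % u))
      = ∑ i ∈ Icc 1 (u-1), ((u*(c*i/u))^2 + 2*(c*i)*((c*i) % u)) := by
        rw [Finset.mul_sum, Finset.mul_sum, ← Finset.sum_add_distrib]
        refine Finset.sum_congr rfl fun i _ => ?_
        ring
    _ = ∑ i ∈ Icc 1 (u-1), ((c*i)^2 + ((c*i) % u)^2) := by
        refine Finset.sum_congr rfl fun i _ => ?_
        have h := Nat.div_add_mod (c*i) u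
        calc (u*(c*i/u))^2 + 2*(c*i)*((c*i) % u)
            = (u*(c*i/u))^2 + 2*(u*(c*i/u)+((c*i) % u))*((c*i) % u) := by rw [h]
          _ = (u*(c*i/u)+((c*i) % u))^2 + ((c*i) % u)^2 := by ring
          _ = (c*i)^2 + ((c*i) % u)^2 := by rw [h]
    _ = c^2 * (∑ i ∈ Icc 1 (u-1), i^2) + ∑ i ∈ Icc 1 (u-1), i^2 := by
        rw [Finset.sum_add_distrib, Finset.mul_sum]
        rw [show (∑ i ∈ Icc 1 (u-1), ((c*i) % u)^2) = ∑ i ∈ Icc 1 (u-1), i^2 from hb]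
        refine congrArg (· + _) (Finset.sum_congr rfl fun i _ => by ring)

/-- P expansion -/
lemma hP (u v c : ℕ) :
    Pc u v c + c*u*(Tc v c) + c*v*(Tc u c)
      = u*v*(∑ k ∈ Icc 1 (c-1), k^2) + c^2 * Fcnt u v c := by
  unfold Pc Tc Fcnt
  rw [Finset.mul_sum, Finset.mul_sum, Finset.mul_sum, Finset.mul_sum,
    ← Finset.sum_add_distrib, ← Finset.sum_add_distrib, ← Finset.sum_add_distrib]
  refine Finset.sum_congr rfl fun k _ => ?_
  have h1 := Nat.div_add_mod (u*k) c
  have h2 := Nat.div_add_mod (v*k) c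
  calc (u*k % c)*(v*k % c) + c*u*(k*(v*k/c)) + c*v*(k*(u*k/c))
      = (u*k % c)*(v*k % c) + c*(v*k/c)*(u*k) + c*(u*k/c)*(v*k) := by ring
    _ = (u*k % c)*(v*k % c) + c*(v*k/c)*(c*(u*k/c) + u*k % c)
          + c*(u*k/c)*(c*(v*k/c) + v*k % c) := by rw [h1, h2]
    _ = (c*(u*k/c) + u*k % c)*(c*(v*k/c) + v*k % c) + c^2*((u*k/c)*(v*k/c)) := by ring
    _ = (u*k)*(v*k) + c^2*((u*k/c)*(v*k/c)) := by rw [h1, h2]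
    _ = u*v*k^2 + c^2*((u*k/c)*(v*k/c)) := by ring

lemma ne_cross {p q x y : ℕ} (hco : Nat.Coprime p q) (hx1 : 1 ≤ x) (hx2 : x ≤ p - 1) :
    q*x ≠ p*y := by
  intro he
  have hdvd : p ∣ q * x := ⟨y, he⟩
  have : p ∣ x := Nat.Coprime.dvd_of_dvd_mul_left hco hdvd
  have := Nat.le_of_dvd (by omega) this
  omega

/-- express `u*k/c` as an indicator sum -/
lemma div_as_sum {u c k : ℕ} (hco : Nat.Coprime u c) (hk1 : 1 ≤ k) (hk2 : k ≤ c - 1) :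
    u*k/c = ∑ i ∈ Icc 1 (u-1), (if c*i < u*k then 1 else 0) := by
  rw [← Finset.card_filter, filt hco hk1 hk2, Nat.card_Icc, Nat.add_sub_cancel]

lemma comm3 {I J K : Finset ℕ} (f : ℕ → ℕ → ℕ → ℕ) :
    ∑ k ∈ K, ∑ i ∈ I, ∑ j ∈ J, f i j k = ∑ i ∈ I, ∑ j ∈ J, ∑ k ∈ K, f i j k := by
  rw [Finset.sum_comm]
  exact Finset.sum_congr rfl fun i _ => Finset.sum_comm

/-- F partition -/
lemma hFpart {a b c : ℕ} (hab : Nat.Coprime a b) (hbc : Nat.Coprime b c)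
    (hac : Nat.Coprime a c) :
    Fcnt a b c + Fcnt b c a + Fcnt c a b = (a-1)*(b-1)*(c-1) := by
  have e1 : Fcnt a b c = ∑ i ∈ Icc 1 (a-1), ∑ j ∈ Icc 1 (b-1), ∑ k ∈ Icc 1 (c-1),
      ((if c*i < a*k then 1 else 0) * (if c*j < b*k then 1 else 0)) := by
    rw [← comm3]
    refine Finset.sum_congr rfl fun k hk => ?_
    simp only [mem_Icc] at hk
    rw [div_as_sum hac hk.1 hk.2, div_as_sum hbc hk.1 hk.2,
      Finset.sum_mul_sum]
  have e2 : Fcnt b c a = ∑ i ∈ Icc 1 (a-1), ∑ j ∈ Icc 1 (b-1), ∑ k ∈ Icc 1 (c-1),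
      ((if a*j < b*i then 1 else 0) * (if a*k < c*i then 1 else 0)) := by
    refine Finset.sum_congr rfl fun i hi => ?_
    simp only [mem_Icc] at hi
    rw [div_as_sum (Nat.coprime_comm.mp hab) hi.1 hi.2,
      div_as_sum (Nat.coprime_comm.mp hac) hi.1 hi.2, Finset.sum_mul_sum]
  have e3 : Fcnt c a b = ∑ i ∈ Icc 1 (a-1), ∑ j ∈ Icc 1 (b-1), ∑ k ∈ Icc 1 (c-1),
      ((if b*k < c*j then 1 else 0) * (if b*i < a*j then 1 else 0)) := by
    unfold Fcnt
    have : ∀ j ∈ Icc 1 (b-1), (c*j/b) * (a*j/b)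
        = ∑ k ∈ Icc 1 (c-1), ∑ i ∈ Icc 1 (a-1),
            ((if b*k < c*j then 1 else 0) * (if b*i < a*j then 1 else 0)) := by
      intro j hj
      simp only [mem_Icc] at hj
      rw [div_as_sum (Nat.coprime_comm.mp hbc) hj.1 hj.2, div_as_sum hab hj.1 hj.2, Finset.sum_mul_sum]
    rw [Finset.sum_congr rfl this]
    calc ∑ j ∈ Icc 1 (b-1), ∑ k ∈ Icc 1 (c-1), ∑ i ∈ Icc 1 (a-1),
          ((if b*k < c*j then 1 else 0) * (if b*i < a*j then 1 else 0))
        = ∑ j ∈ Icc 1 (b-1), ∑ i ∈ Icc 1 (a-1), ∑ k ∈ Icc 1 (c-1),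
          ((if b*k < c*j then 1 else 0) * (if b*i < a*j then 1 else 0)) :=
          Finset.sum_congr rfl fun j _ => Finset.sum_comm
      _ = ∑ i ∈ Icc 1 (a-1), ∑ j ∈ Icc 1 (b-1), ∑ k ∈ Icc 1 (c-1),
          ((if b*k < c*j then 1 else 0) * (if b*i < a*j then 1 else 0)) :=
          Finset.sum_comm
  rw [e1, e2, e3]
  have hpoint : ∀ i ∈ Icc 1 (a-1), ∀ j ∈ Icc 1 (b-1), ∀ k ∈ Icc 1 (c-1),
      ((if c*i < a*k then 1 else 0) * (if c*j < b*k then 1 else 0))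
      + ((if a*j < b*i then 1 else 0) * (if a*k < c*i then 1 else 0))
      + ((if b*k < c*j then 1 else 0) * (if b*i < a*j then 1 else 0)) = 1 := by
    intro i hi j hj k hk
    simp only [mem_Icc] at hi hj hk
    have hb0 : 0 < b := by omega
    have ha0 : 0 < a := by omega
    have hc0 : 0 < c := by omega
    have q1 : (c*i < a*k) ↔ b*(c*i) < b*(a*k) := (Nat.mul_lt_mul_left hb0).symm
    have q2 : (c*j < b*k) ↔ a*(c*j) < a*(b*k) := (Nat.mul_lt_mul_left ha0).symm
    have q3 : (a*j < b*i) ↔ c*(a*j) < c*(b*i) := (Nat.mul_lt_mul_left hc0).symm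
    have q4 : (a*k < c*i) ↔ b*(a*k) < b*(c*i) := (Nat.mul_lt_mul_left hb0).symm
    have q5 : (b*k < c*j) ↔ a*(b*k) < a*(c*j) := (Nat.mul_lt_mul_left ha0).symm
    have q6 : (b*i < a*j) ↔ c*(b*i) < c*(a*j) := (Nat.mul_lt_mul_left hc0).symm
    have d1 : c*i ≠ a*k := ne_cross hac hi.1 hi.2
    have d2 : b*i ≠ a*j := ne_cross hab hi.1 hi.2
    have d3 : c*j ≠ b*k := ne_cross hbc hj.1 hj.2
    have D1 : b*(c*i) ≠ b*(a*k) := fun h => d1 (Nat.eq_of_mul_eq_mul_left hb0 h)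
    have D2 : c*(b*i) ≠ c*(a*j) := fun h => d2 (Nat.eq_of_mul_eq_mul_left hc0 h)
    have D3 : a*(c*j) ≠ a*(b*k) := fun h => d3 (Nat.eq_of_mul_eq_mul_left ha0 h)
    have hXY : b*(c*i) = c*(b*i) := by ring
    have hYZ' : a*(c*j) = c*(a*j) := by ring
    have hZ : b*(a*k) = a*(b*k) := by ring
    simp only [q1, q2, q3, q4, q5, q6]
    split_ifs <;> omega
  have key2 : ∑ i ∈ Icc 1 (a-1), ∑ j ∈ Icc 1 (b-1), ∑ k ∈ Icc 1 (c-1),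
      (((if c*i < a*k then 1 else 0) * (if c*j < b*k then 1 else 0))
      + ((if a*j < b*i then 1 else 0) * (if a*k < c*i then 1 else 0))
      + ((if b*k < c*j then 1 else 0) * (if b*i < a*j then 1 else 0)))
      = (∑ i ∈ Icc 1 (a-1), ∑ j ∈ Icc 1 (b-1), ∑ k ∈ Icc 1 (c-1),
          ((if c*i < a*k then 1 else 0) * (if c*j < b*k then 1 else 0)))
      + (∑ i ∈ Icc 1 (a-1), ∑ j ∈ Icc 1 (b-1), ∑ k ∈ Icc 1 (c-1),
          ((if a*j < b*i then 1 else 0) * (if a*k < c*i then 1 else 0)))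
      + (∑ i ∈ Icc 1 (a-1), ∑ j ∈ Icc 1 (b-1), ∑ k ∈ Icc 1 (c-1),
          ((if b*k < c*j then 1 else 0) * (if b*i < a*j then 1 else 0))) := by
    simp only [Finset.sum_add_distrib]
  have key3 : ∑ i ∈ Icc 1 (a-1), ∑ j ∈ Icc 1 (b-1), ∑ k ∈ Icc 1 (c-1),
      (((if c*i < a*k then 1 else 0) * (if c*j < b*k then 1 else 0))
      + ((if a*j < b*i then 1 else 0) * (if a*k < c*i then 1 else 0))
      + ((if b*k < c*j then 1 else 0) * (if b*i < a*j then 1 else 0)))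
      = (a-1)*(b-1)*(c-1) := by
    rw [Finset.sum_congr rfl (fun i hi => Finset.sum_congr rfl (fun j hj =>
      Finset.sum_congr rfl (fun k hk => hpoint i hi j hj k hk)))]
    simp only [Finset.sum_const, Nat.card_Icc, Nat.add_sub_cancel, smul_eq_mul, mul_one]
    ring
  exact key2.symm.trans key3

lemma sum_sq (n : ℕ) : 6 * ∑ k ∈ Icc 1 n, k^2 = 2*n^3 + 3*n^2 + n := by
  induction n with
  | zero => simp
  | succ m ih =>
    rw [Finset.sum_Icc_succ_top (by omega)]
    have h2 : (m+1)^2 = m^2 + 2*m + 1 := by ring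
    have h3 : (m+1)^3 = m^3 + 3*m^2 + 3*m + 1 := by ring
    omega

/-! ### Real-level assembly -/

lemma rsum_id {c : ℕ} (hc : 1 ≤ c) :
    2 * ∑ k ∈ Icc 1 (c-1), (k:ℝ) = ((c:ℝ)-1)^2 + ((c:ℝ)-1) := by
  have := congrArg (Nat.cast (R := ℝ)) (sum_id (c-1))
  push_cast [Nat.cast_sub hc] at this
  linarith

lemma rsum_sq {c : ℕ} (hc : 1 ≤ c) :
    6 * ∑ k ∈ Icc 1 (c-1), (k:ℝ)^2 = 2*((c:ℝ)-1)^3 + 3*((c:ℝ)-1)^2 + ((c:ℝ)-1) := by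
  have := congrArg (Nat.cast (R := ℝ)) (sum_sq (c-1))
  push_cast [Nat.cast_sub hc] at this
  linarith

/-- two-term reciprocity, `T`-form -/
lemma TTpair {u c : ℕ} (hco : Nat.Coprime u c) (hu : 1 ≤ u) (hc : 1 ≤ c) :
    (u:ℝ) * (Tc u c : ℕ) + (c:ℝ) * (Tc c u : ℕ)
      = (u:ℝ)*((u:ℝ)-1)*(c:ℝ)*((c:ℝ)-1)/2 + ((c:ℝ)^2-1)*((u:ℝ)-1)*(2*(u:ℝ)-1)/12
        - ((c:ℝ)-1)*(u:ℝ)*((u:ℝ)-1)/4 := by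
  have h1 := congrArg (Nat.cast (R := ℝ)) (hR1 hco)
  have h2 := congrArg (Nat.cast (R := ℝ)) (hR2 (Nat.coprime_comm.mp hco))
  have h3 := congrArg (Nat.cast (R := ℝ)) (hR3 (Nat.coprime_comm.mp hco))
  have h4 := congrArg (Nat.cast (R := ℝ)) (hR4 c u)
  push_cast [Nat.cast_sub hu, Nat.cast_sub hc] at h1 h2 h3 h4
  rw [Finset.sum_add_distrib] at h1
  have hS1c := rsum_id hc
  have hS1u := rsum_id hu
  have hS2u := rsum_sq hu
  have h2u : (2:ℝ)*(u:ℝ) ≠ 0 := by positivity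
  apply mul_left_cancel₀ h2u
  linear_combination (u:ℝ)^2*h1 - (u:ℝ)*h2 - h3 + 2*(c:ℝ)*h4
    + ((u:ℝ)^2*((u:ℝ)-1))*hS1c - ((u:ℝ)*((c:ℝ)-1)/2)*hS1u + (((c:ℝ)^2-1)/6)*hS2u

noncomputable def W (u v c : ℕ) : ℝ :=
  ∑ k ∈ Icc 1 (c-1), (((u*k % c : ℕ):ℝ)/c - 1/2) * (((v*k % c : ℕ):ℝ)/c - 1/2)

lemma hW {u v c : ℕ} (hu : Nat.Coprime u c) (hv : Nat.Coprime v c) (hc : 1 ≤ c) :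
    (c:ℝ)^2 * W u v c = (Pc u v c : ℕ)
      - (c:ℝ)*(∑ k ∈ Icc 1 (c-1), (k:ℝ)) + (c:ℝ)^2*((c:ℝ)-1)/4 := by
  have hc0 : (c:ℝ) ≠ 0 := by positivity
  have hbu := bij (M := ℝ) hu (fun n => (n:ℝ))
  have hbv := bij (M := ℝ) hv (fun n => (n:ℝ))
  have expand : ∀ k, (c:ℝ)^2 * ((((u*k % c : ℕ):ℝ)/c - 1/2) * (((v*k % c : ℕ):ℝ)/c - 1/2))
      = ((u*k % c : ℕ):ℝ)*((v*k % c : ℕ):ℝ)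
        - (c:ℝ)/2*((u*k % c : ℕ):ℝ) - (c:ℝ)/2*((v*k % c : ℕ):ℝ) + (c:ℝ)^2/4 := by
    intro k
    field_simp
    ring
  unfold W
  rw [Finset.mul_sum]
  rw [Finset.sum_congr rfl (fun k _ => expand k)]
  have hPcast : ∑ k ∈ Icc 1 (c-1), ((u*k % c : ℕ):ℝ)*((v*k % c : ℕ):ℝ) = ((Pc u v c : ℕ):ℝ) := by
    unfold Pc
    push_cast
    rfl
  have hcard : ((Icc 1 (c-1)).card : ℝ) = (c:ℝ) - 1 := by
    rw [Nat.card_Icc, Nat.add_sub_cancel]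
    push_cast [Nat.cast_sub hc]
    ring
  calc ∑ k ∈ Icc 1 (c-1), (((u*k % c : ℕ):ℝ)*((v*k % c : ℕ):ℝ)
        - (c:ℝ)/2*((u*k % c : ℕ):ℝ) - (c:ℝ)/2*((v*k % c : ℕ):ℝ) + (c:ℝ)^2/4)
      = (∑ k ∈ Icc 1 (c-1), ((u*k % c : ℕ):ℝ)*((v*k % c : ℕ):ℝ))
        - (c:ℝ)/2*(∑ k ∈ Icc 1 (c-1), ((u*k % c : ℕ):ℝ))
        - (c:ℝ)/2*(∑ k ∈ Icc 1 (c-1), ((v*k % c : ℕ):ℝ))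
        + ((Icc 1 (c-1)).card : ℝ)*((c:ℝ)^2/4) := by
        rw [Finset.sum_add_distrib, Finset.sum_sub_distrib, Finset.sum_sub_distrib,
          Finset.mul_sum, Finset.mul_sum, Finset.sum_const, nsmul_eq_mul]
    _ = ((Pc u v c : ℕ):ℝ) - (c:ℝ)*(∑ k ∈ Icc 1 (c-1), (k:ℝ)) + (c:ℝ)^2*((c:ℝ)-1)/4 := by
        rw [hPcast, hbu, hbv, hcard]
        ring

/-- The three-term (Rademacher) identity, symmetric form. -/
lemma core {a b c : ℕ} (ha : 1 ≤ a) (hb : 1 ≤ b) (hc : 1 ≤ c)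
    (hab : Nat.Coprime a b) (hbc : Nat.Coprime b c) (hac : Nat.Coprime a c) :
    12*(a:ℝ)*b*c*(W a b c + W b c a + W c a b)
      = (a:ℝ)^2 + (b:ℝ)^2 + (c:ℝ)^2 - 3*(a:ℝ)*b*c := by
  have hWc := hW hac hbc hc
  have hWa := hW (Nat.coprime_comm.mp hab) (Nat.coprime_comm.mp hac) ha
  have hWb := hW (Nat.coprime_comm.mp hbc) hab hb
  have hPc := congrArg (Nat.cast (R := ℝ)) (hP a b c)
  have hPa := congrArg (Nat.cast (R := ℝ)) (hP b c a)
  have hPb := congrArg (Nat.cast (R := ℝ)) (hP c a b)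
  have hFr := congrArg (Nat.cast (R := ℝ)) (hFpart hab hbc hac)
  push_cast [Nat.cast_sub ha, Nat.cast_sub hb, Nat.cast_sub hc] at hPc hPa hPb hFr
  have hTTbc := TTpair hbc hb hc
  have hTTac := TTpair hac ha hc
  have hTTab := TTpair hab ha hb
  have hS1a := rsum_id ha
  have hS1b := rsum_id hb
  have hS1c := rsum_id hc
  have hS2a := rsum_sq ha
  have hS2b := rsum_sq hb
  have hS2c := rsum_sq hc
  have habc : (a:ℝ)*b*c ≠ 0 := by positivity
  apply mul_left_cancel₀ habc
  linear_combination 12*(a:ℝ)^2*(b:ℝ)^2*hWc + 12*(b:ℝ)^2*(c:ℝ)^2*hWa + 12*(c:ℝ)^2*(a:ℝ)^2*hWb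
    + 12*(a:ℝ)^2*(b:ℝ)^2*hPc + 12*(b:ℝ)^2*(c:ℝ)^2*hPa + 12*(c:ℝ)^2*(a:ℝ)^2*hPb
    - 12*(a:ℝ)^3*(b:ℝ)*(c:ℝ)*hTTbc - 12*(a:ℝ)*(b:ℝ)^3*(c:ℝ)*hTTac - 12*(a:ℝ)*(b:ℝ)*(c:ℝ)^3*hTTab
    + 12*(a:ℝ)^2*(b:ℝ)^2*(c:ℝ)^2*hFr
    - 6*(a:ℝ)^2*(b:ℝ)^2*(c:ℝ)*hS1c - 6*(a:ℝ)*(b:ℝ)^2*(c:ℝ)^2*hS1a - 6*(a:ℝ)^2*(b:ℝ)*(c:ℝ)^2*hS1b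
    + 2*(a:ℝ)^3*(b:ℝ)^3*hS2c + 2*(b:ℝ)^3*(c:ℝ)^3*hS2a + 2*(c:ℝ)^3*(a:ℝ)^3*hS2b


/-! ### saw lemmas -/

lemma saw_eq_fract {x : ℝ} (h : Int.fract x ≠ 0) : saw x = Int.fract x - 1/2 := by
  have hx := Int.floor_add_fract x
  unfold saw
  rw [if_neg h]
  linarith

lemma saw_intCast (n : ℤ) : saw (n : ℝ) = 0 := by
  unfold saw
  simp [Int.fract_intCast]

lemma saw_add_int (x : ℝ) (n : ℤ) : saw (x + n) = saw x := by
  unfold saw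
  rw [Int.fract_add_intCast, Int.floor_add_intCast]
  split
  · rfl
  · push_cast; ring

lemma saw_neg (x : ℝ) : saw (-x) = - saw x := by
  by_cases h : Int.fract x = 0
  · unfold saw
    simp [h, Int.fract_neg_eq_zero.2 h]
  · have h' : Int.fract (-x) ≠ 0 := fun hh => h (Int.fract_neg_eq_zero.1 hh)
    rw [saw_eq_fract h, saw_eq_fract h', Int.fract_neg h]
    ring

lemma saw_frac {r c : ℕ} (h1 : 1 ≤ r) (h2 : r < c) :
    saw ((r : ℝ)/c) = (r : ℝ)/c - 1/2 := by
  have hc : (0:ℝ) < c := by exact_mod_cast lt_of_le_of_lt (Nat.zero_le r) h2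
  have hr : (0:ℝ) < r := by exact_mod_cast h1
  have hlt : (r:ℝ)/c < 1 := by
    rw [div_lt_one hc]; exact_mod_cast h2
  have hpos : 0 < (r:ℝ)/c := div_pos hr hc
  have hfr : Int.fract ((r:ℝ)/c) = (r:ℝ)/c := Int.fract_eq_self.2 ⟨le_of_lt hpos, hlt⟩
  have hne : Int.fract ((r:ℝ)/c) ≠ 0 := by rw [hfr]; exact ne_of_gt hpos
  rw [saw_eq_fract hne, hfr]

/-- saw of x/c depends only on x mod c. -/
lemma saw_div_congr {c : ℕ} (hc : 0 < c) {x y : ℤ} (h : (c:ℤ) ∣ (x - y)) :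
    saw ((x:ℝ)/c) = saw ((y:ℝ)/c) := by
  obtain ⟨n, hn⟩ := h
  have hx : (x:ℝ) = y + c * n := by
    have : (x:ℝ) - y = c * n := by exact_mod_cast congrArg (Int.cast : ℤ → ℝ) hn
    linarith
  have hc' : (c:ℝ) ≠ 0 := by positivity
  rw [hx]
  rw [show ((y:ℝ) + c*n)/c = (y:ℝ)/c + (n:ℤ) from by field_simp]
  exact saw_add_int _ _


lemma dedekind_restrict (m : ℤ) (c : ℕ) (hc : 1 ≤ c) :
    dedekindSum m c = ∑ k ∈ Icc 1 (c-1), saw ((k:ℝ)/c) * saw ((m:ℝ)*k/c) := by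
  unfold dedekindSum
  have hc0 : (c:ℝ) ≠ 0 := by positivity
  have hins : Icc 1 c = insert c (Icc 1 (c-1)) := by
    ext x; simp only [mem_Icc, mem_insert]; omega
  rw [hins, Finset.sum_insert (by simp only [mem_Icc]; omega)]
  have htop : saw ((c:ℝ)/c) = 0 := by
    rw [div_self hc0]
    simpa using saw_intCast 1
  rw [htop, zero_mul, zero_add]

/-- saw of `(u*k)/c` for a natural numerator coprime to the modulus -/
lemma saw_natmul {u c k : ℕ} (hco : Nat.Coprime u c) (hk1 : 1 ≤ k) (hk2 : k ≤ c - 1) :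
    saw (((u*k : ℕ):ℝ)/c) = ((u*k % c : ℕ):ℝ)/c - 1/2 := by
  have hc2 : 2 ≤ c := by omega
  have hr1 : 1 ≤ u*k % c := by
    rcases Nat.eq_zero_or_pos (u*k % c) with h0 | h0
    · exfalso
      have hdvd : c ∣ u * k := Nat.dvd_of_mod_eq_zero h0
      have : c ∣ k := Nat.Coprime.dvd_of_dvd_mul_left (Nat.coprime_comm.mp hco) hdvd
      have := Nat.le_of_dvd (by omega) this
      omega
    · omega
  have hr2 : u*k % c < c := Nat.mod_lt _ (by omega)
  have hcR : (c:ℝ) ≠ 0 := by positivity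
  set q := u*k/c with hq
  set r := u*k % c with hrr
  have h : c*q + r = u*k := Nat.div_add_mod _ _
  have hsplit : ((u*k : ℕ):ℝ)/c = ((r : ℕ):ℝ)/c + ((q : ℕ) : ℤ) := by
    have hcast : ((u*k : ℕ):ℝ) = (c:ℝ)*(q:ℝ) + (r:ℝ) := by exact_mod_cast h.symm
    rw [hcast]
    push_cast
    field_simp
    ring
  rw [hsplit, saw_add_int, saw_frac hr1 hr2]

/-- reindexing the Dedekind-type sum by a unit `w` -/
lemma reindex {c : ℕ} (hc : 2 ≤ c) {w : ℕ} (hw : Nat.Coprime w c) (m m' : ℤ)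
    (hmm : (c:ℤ) ∣ (m * w - m')) :
    ∑ k ∈ Icc 1 (c-1), saw ((k:ℝ)/c) * saw ((m:ℝ)*k/c)
      = ∑ k ∈ Icc 1 (c-1), saw (((w*k : ℕ):ℝ)/c) * saw (((m'*k : ℤ):ℝ)/c) := by
  rw [← bij hw (f := fun n => saw ((n:ℝ)/c) * saw ((m:ℝ)*n/c))]
  refine Finset.sum_congr rfl fun k hk => ?_
  simp only [mem_Icc] at hk
  have hc0 : 0 < c := by omega
  set q := (w*k)/c with hqd
  set r := (w*k) % c with hrd
  have hdiv : c*q + r = w*k := Nat.div_add_mod _ _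
  have hmodℤ : ((r : ℕ) : ℤ) = (w*k : ℤ) - (c:ℤ)*((q : ℕ):ℤ) := by
    have : ((c*q + r : ℕ) : ℤ) = ((w*k : ℕ) : ℤ) := congrArg _ hdiv
    push_cast at this
    push_cast
    linarith
  congr 1
  · -- first factor
    have e1 : (((r : ℕ)) : ℝ)/c = ((((r : ℕ)) : ℤ) : ℝ)/c := by push_cast; ring
    have e2 : (((w*k : ℕ)) : ℝ)/c = ((((w*k : ℕ)) : ℤ) : ℝ)/c := by push_cast; ring
    rw [e1, e2]
    apply saw_div_congr hc0
    refine ⟨-(q : ℤ), ?_⟩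
    rw [hmodℤ]
    push_cast
    ring
  · -- second factor
    have e1 : (m:ℝ) * ((r : ℕ) : ℝ)/c = (((m * (r : ℕ) : ℤ)) : ℝ)/c := by
      push_cast; ring
    rw [e1]
    apply saw_div_congr hc0
    have key : m * ((r : ℕ) : ℤ) - m'*k
        = (m*w - m')*k - m*(c:ℤ)*((q : ℕ):ℤ) := by
      rw [hmodℤ]; push_cast; ring
    rw [key]
    obtain ⟨d, hd⟩ := hmm
    exact ⟨d*k - m*((q : ℕ):ℤ), by rw [hd]; ring⟩

/-- positive case: `m' = v` a natural -/
lemma sum_to_W {c : ℕ} (hc : 2 ≤ c) {w v : ℕ} (hw : Nat.Coprime w c) (hv : Nat.Coprime v c) :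
    ∑ k ∈ Icc 1 (c-1), saw (((w*k : ℕ):ℝ)/c) * saw ((((v:ℤ)*k : ℤ):ℝ)/c) = W w v c := by
  unfold W
  refine Finset.sum_congr rfl fun k hk => ?_
  simp only [mem_Icc] at hk
  have e : ((((v:ℤ)*k : ℤ)) : ℝ)/c = (((v*k : ℕ)) : ℝ)/c := by push_cast; ring
  rw [e, saw_natmul hw hk.1 hk.2, saw_natmul hv hk.1 hk.2]

lemma sum_to_W_neg {c : ℕ} (hc : 2 ≤ c) {w v : ℕ} (hw : Nat.Coprime w c) (hv : Nat.Coprime v c) :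
    ∑ k ∈ Icc 1 (c-1), saw (((w*k : ℕ):ℝ)/c) * saw (((-(v:ℤ)*k : ℤ):ℝ)/c) = -(W w v c) := by
  unfold W
  rw [← Finset.sum_neg_distrib]
  refine Finset.sum_congr rfl fun k hk => ?_
  simp only [mem_Icc] at hk
  have e : (((-(v:ℤ)*k : ℤ)) : ℝ)/c = -((((v*k : ℕ)) : ℝ)/c) := by push_cast; ring
  rw [e, saw_neg, saw_natmul hw hk.1 hk.2, saw_natmul hv hk.1 hk.2]
  ring

lemma W_comm (u v c : ℕ) : W u v c = W v u c := by
  unfold W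
  exact Finset.sum_congr rfl fun k _ => mul_comm _ _


/-- convert `S` to `W` form -/
lemma S_to_W {c : ℕ} (hc : 1 ≤ c) {w v : ℕ} (hw : Nat.Coprime w c) (hv : Nat.Coprime v c)
    (m : ℤ) (hmm : (c:ℤ) ∣ (m * w - v)) : S m c = 12 * W w v c := by
  rcases Nat.lt_or_ge c 2 with hc2 | hc2
  · have hc1 : c = 1 := by omega
    subst hc1
    unfold S W
    rw [dedekind_restrict m 1 le_rfl]
    simp
  · unfold S
    rw [dedekind_restrict m c (by omega), reindex hc2 hw m (v:ℤ) hmm, sum_to_W hc2 hw hv]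

lemma S_to_W_neg {c : ℕ} (hc : 1 ≤ c) {w v : ℕ} (hw : Nat.Coprime w c) (hv : Nat.Coprime v c)
    (m : ℤ) (hmm : (c:ℤ) ∣ (m * w + v)) : S m c = -(12 * W w v c) := by
  rcases Nat.lt_or_ge c 2 with hc2 | hc2
  · have hc1 : c = 1 := by omega
    subst hc1
    unfold S W
    rw [dedekind_restrict m 1 le_rfl]
    simp
  · unfold S
    have hmm' : (c:ℤ) ∣ (m * w - (-(v:ℤ))) := by
      have : m * w - (-(v:ℤ)) = m*w + v := by ring
      rw [this]; exact hmm
    rw [dedekind_restrict m c (by omega), reindex hc2 hw m (-(v:ℤ)) hmm',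
      sum_to_W_neg hc2 hw hv]
    ring

end DedAux

theorem stmt_0 (a b t : ℕ) (ha : 0 < a) (hb : 0 < b) (ht : 0 < t)
    (hab : Nat.Coprime a b) (htdvd : t ∣ a ^ 2 + 1) (hbt : Nat.Coprime b t)
    (astar bstar : ℤ)
    (hastar : (a : ℤ) * astar ≡ 1 [ZMOD (b : ℤ)])
    (hbstar : (b : ℤ) * bstar ≡ 1 [ZMOD (a : ℤ)]) :
    S ((t : ℤ) * astar) b + S ((t : ℤ) * bstar) a =
      ((a : ℝ) ^ 2 + (b : ℝ) ^ 2 + (t : ℝ) ^ 2) / ((t : ℝ) * a * b) - 3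
        + S ((a : ℤ) * b) t := by
  have hat : Nat.Coprime a t := by
    have h1 : Nat.gcd a t ∣ a * a := dvd_mul_of_dvd_right (Nat.gcd_dvd_left a t) a
    have h2 : Nat.gcd a t ∣ a ^ 2 + 1 := dvd_trans (Nat.gcd_dvd_right a t) htdvd
    have ha2 : a ^ 2 = a * a := sq a
    rw [ha2] at h2
    have h3 := Nat.dvd_sub h2 h1
    have he : a*a+1 - a*a = 1 := by omega
    rw [he] at h3
    exact Nat.dvd_one.mp h3
  have hd1 : (b:ℤ) ∣ 1 - (a:ℤ)*astar := hastar.dvd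
  have hd2 : (a:ℤ) ∣ 1 - (b:ℤ)*bstar := hbstar.dvd
  have hS1 : S ((t : ℤ) * astar) b = 12 * DedAux.W a t b := by
    apply DedAux.S_to_W hb hab (Nat.coprime_comm.mp hbt)
    obtain ⟨d, hd⟩ := hd1
    exact ⟨-(t:ℤ)*d, by linear_combination (-(t:ℤ))*hd⟩
  have hS2 : S ((t : ℤ) * bstar) a = 12 * DedAux.W b t a := by
    apply DedAux.S_to_W ha (Nat.coprime_comm.mp hab) (Nat.coprime_comm.mp hat)
    obtain ⟨d, hd⟩ := hd2
    exact ⟨-(t:ℤ)*d, by linear_combination (-(t:ℤ))*hd⟩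
  have hS3 : S ((a : ℤ) * b) t = -(12 * DedAux.W a b t) := by
    apply DedAux.S_to_W_neg ht hat hbt
    obtain ⟨d, hd⟩ := htdvd
    refine ⟨(b:ℤ)*d, ?_⟩
    have hdz : ((a:ℕ):ℤ)^2 + 1 = (t:ℤ)*(d:ℤ) := by exact_mod_cast congrArg (Nat.cast (R := ℤ)) hd
    linear_combination (b:ℤ)*hdz
  have hcore := DedAux.core ha hb ht hab hbt hat
  rw [DedAux.W_comm t a b] at hcore
  rw [hS1, hS2, hS3]
  have hne : (t:ℝ) * a * b ≠ 0 := by positivity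
  field_simp
  linear_combination hcore
end

section
/- If a and b are coprime natural numbers, then S(a,b) + S(b,a) = (a² + b² + 1)/(a·b) − 3. -/
namespace DedekindRecipAux


/-- `T a b = ∑_{k=1}^{b-1} k ⌊ak/b⌋`. -/
def T (a b : ℕ) : ℕ := ∑ k ∈ Finset.Ico 1 b, k * (a * k / b)
def U (a b : ℕ) : ℕ := ∑ k ∈ Finset.Ico 1 b, (a * k / b)
def Q (a b : ℕ) : ℕ := ∑ k ∈ Finset.Ico 1 b, (a * k / b) ^ 2
def R1 (b : ℕ) : ℕ := ∑ k ∈ Finset.Ico 1 b, k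
def R2 (b : ℕ) : ℕ := ∑ k ∈ Finset.Ico 1 b, k ^ 2

lemma hR1 (b : ℕ) : 2 * R1 b + b = b * b := by
  induction b with
  | zero => simp [R1]
  | succ n ih =>
    rcases Nat.eq_zero_or_pos n with h | h
    · subst h; simp [R1]
    · rw [R1, Finset.sum_Ico_succ_top (by omega)]
      have : 2 * R1 n + n = n * n := ih
      rw [R1] at this
      nlinarith [this]

lemma hR2 (b : ℕ) : 6 * R2 b + 3 * b ^ 2 = 2 * b ^ 3 + b := by
  induction b with
  | zero => simp [R2]
  | succ n ih =>
    rcases Nat.eq_zero_or_pos n with h | h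
    · subst h; simp [R2]
    · rw [R2, Finset.sum_Ico_succ_top (by omega)]
      rw [R2] at ih
      nlinarith [ih]

lemma mod_ne_zero {a b k : ℕ} (hab : Nat.Coprime a b) (h1 : 1 ≤ k) (h2 : k < b) :
    1 ≤ a * k % b := by
  rcases Nat.eq_zero_or_pos (a * k % b) with h | h
  · exfalso
    have hd : b ∣ a * k := Nat.dvd_of_mod_eq_zero h
    have : b ∣ k := (Nat.Coprime.dvd_of_dvd_mul_left hab.symm (by rwa [mul_comm] at hd ⊢))
    have := Nat.le_of_dvd (by omega) this
    omega
  · exact h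

/-- reflection bijection on `Ico 1 b` -/
lemma sum_reflect {M : Type*} [AddCommMonoid M] (b : ℕ) (f : ℕ → M) :
    ∑ k ∈ Finset.Ico 1 b, f (b - k) = ∑ k ∈ Finset.Ico 1 b, f k := by
  refine Finset.sum_nbij' (fun k => b - k) (fun k => b - k) ?_ ?_ ?_ ?_ ?_ <;>
    intro x hx <;> simp only [Finset.mem_Ico] at * <;> omega

/-- mods pair up: m_k + m_{b-k} = b -/
lemma mod_pair {a b k : ℕ} (hab : Nat.Coprime a b) (h1 : 1 ≤ k) (h2 : k < b) :
    a * k % b + a * (b - k) % b = b := by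
  have hm1 := mod_ne_zero hab h1 h2
  have hm2 := mod_ne_zero hab (k := b - k) (by omega) (by omega)
  have hlt1 : a * k % b < b := Nat.mod_lt _ (by omega)
  have hlt2 : a * (b - k) % b < b := Nat.mod_lt _ (by omega)
  have hsum : (a * k % b + a * (b - k) % b) % b = 0 := by
    rw [← Nat.add_mod, ← Nat.mul_add, Nat.add_sub_cancel' h2.le, Nat.mul_mod_left]
  obtain ⟨c, hc⟩ := Nat.dvd_of_mod_eq_zero hsum
  have hs2 : b * c < 2 * b := by omega
  have hc0 : 0 < c := by
    rcases Nat.eq_zero_or_pos c with h | h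
    · subst h; simp at hc; omega
    · exact h
  have hc1 : c = 1 := by
    by_contra h
    have : 2 ≤ c := by omega
    nlinarith
  subst hc1; omega


lemma sum_mod_bij {M : Type*} [AddCommMonoid M] {a b : ℕ} (hab : Nat.Coprime a b)
    (f : ℕ → M) :
    ∑ k ∈ Finset.Ico 1 b, f (a * k % b) = ∑ k ∈ Finset.Ico 1 b, f k := by
  rcases Nat.lt_or_ge b 2 with hb | hb
  · interval_cases b <;> simp
  haveI : NeZero b := ⟨by omega⟩
  set u := ZMod.unitOfCoprime a hab with hu
  set c := ((u⁻¹ : (ZMod b)ˣ) : ZMod b).val with hc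
  have hmod : a * c ≡ 1 [MOD b] := by
    have : ((a * c : ℕ) : ZMod b) = ((1 : ℕ) : ZMod b) := by
      push_cast
      rw [ZMod.natCast_val, ZMod.cast_id]
      have : (a : ZMod b) = (u : ZMod b) := (ZMod.coe_unitOfCoprime a hab).symm
      rw [this, ← Units.val_mul, mul_inv_cancel, Units.val_one]
    exact (ZMod.natCast_eq_natCast_iff _ _ _).mp this
  have hinv : ∀ k, k < b → c * (a * k % b) % b = k := by
    intro k hk
    have h1 : c * (a * k % b) ≡ c * (a * k) [MOD b] :=
      Nat.ModEq.mul_left c (Nat.mod_modEq _ _)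
    have h2 : c * (a * k) = (a * c) * k := by ring
    have h3 : (a * c) * k ≡ 1 * k [MOD b] := Nat.ModEq.mul_right k hmod
    have := (h1.trans (h2 ▸ h3)).trans (by rw [one_mul] : 1 * k ≡ k [MOD b])
    calc c * (a * k % b) % b = k % b := this
    _ = k := Nat.mod_eq_of_lt hk
  have hinv2 : ∀ k, k < b → a * (c * k % b) % b = k := by
    intro k hk
    have h1 : a * (c * k % b) ≡ a * (c * k) [MOD b] :=
      Nat.ModEq.mul_left a (Nat.mod_modEq _ _)
    have h2 : a * (c * k) = (a * c) * k := by ring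
    have h3 : (a * c) * k ≡ 1 * k [MOD b] := Nat.ModEq.mul_right k hmod
    have := (h1.trans (h2 ▸ h3)).trans (by rw [one_mul] : 1 * k ≡ k [MOD b])
    calc a * (c * k % b) % b = k % b := this
    _ = k := Nat.mod_eq_of_lt hk
  refine Finset.sum_nbij' (fun k => a * k % b) (fun k => c * k % b) ?_ ?_ ?_ ?_ ?_
  · intro k hk
    simp only [Finset.mem_Ico] at hk ⊢
    refine ⟨?_, Nat.mod_lt _ (by omega)⟩
    rcases Nat.eq_zero_or_pos (a * k % b) with h | h
    · exfalso
      have hd : b ∣ a * k := Nat.dvd_of_mod_eq_zero h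
      have : b ∣ k := Nat.Coprime.dvd_of_dvd_mul_left hab.symm (by rwa [mul_comm] at hd ⊢)
      have := Nat.le_of_dvd (by omega) this
      omega
    · exact h
  · intro k hk
    simp only [Finset.mem_Ico] at hk ⊢
    refine ⟨?_, Nat.mod_lt _ (by omega)⟩
    rcases Nat.eq_zero_or_pos (c * k % b) with h | h
    · exfalso
      have : a * (c * k % b) % b = k := hinv2 k hk.2
      rw [h] at this
      simp at this
      omega
    · exact h
  · intro k hk
    simp only [Finset.mem_Ico] at hk
    exact hinv k hk.2
  · intro k hk
    simp only [Finset.mem_Ico] at hk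
    exact hinv2 k hk.2
  · intro k _; rfl



/-- F1: `a² R2 b + b² Q a b = R2 b + 2 a b T a b`. -/
lemma hF1 {a b : ℕ} (hab : Nat.Coprime a b) :
    a ^ 2 * R2 b + b ^ 2 * Q a b = R2 b + 2 * (a * (b * T a b)) := by
  have hmods : (∑ k ∈ Finset.Ico 1 b, (a * k % b) ^ 2) = R2 b := by
    have := sum_mod_bij hab (fun x => x ^ 2)
    simpa [R2] using this
  have key : ∀ k ∈ Finset.Ico 1 b,
      (a * k) ^ 2 + (b * (a * k / b)) ^ 2
        = (a * k % b) ^ 2 + 2 * ((a * k) * (b * (a * k / b))) := by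
    intro k _
    have h := (Nat.div_add_mod (a * k) b).symm
    set q := a * k / b
    set m := a * k % b
    rw [h]; ring
  have hsum := Finset.sum_congr rfl key
  rw [Finset.sum_add_distrib, Finset.sum_add_distrib, hmods] at hsum
  have e1 : (∑ k ∈ Finset.Ico 1 b, (a * k) ^ 2) = a ^ 2 * R2 b := by
    rw [R2, Finset.mul_sum]; exact Finset.sum_congr rfl fun k _ => by ring
  have e2 : (∑ k ∈ Finset.Ico 1 b, (b * (a * k / b)) ^ 2) = b ^ 2 * Q a b := by
    rw [Q, Finset.mul_sum]; exact Finset.sum_congr rfl fun k _ => by ring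
  have e3 : (∑ k ∈ Finset.Ico 1 b, 2 * ((a * k) * (b * (a * k / b))))
      = 2 * (a * (b * T a b)) := by
    rw [T, Finset.mul_sum, Finset.mul_sum, Finset.mul_sum]
    exact Finset.sum_congr rfl fun k _ => by ring
  rw [e1, e2, e3] at hsum
  exact hsum

/-- quotients pair up -/
lemma div_pair {a b k : ℕ} (ha : 0 < a) (hab : Nat.Coprime a b) (h1 : 1 ≤ k) (h2 : k < b) :
    a * k / b + a * (b - k) / b + 1 = a := by
  have hb : 0 < b := by omega
  apply Nat.eq_of_mul_eq_mul_left hb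
  have d1 := Nat.div_add_mod (a * k) b
  have d2 := Nat.div_add_mod (a * (b - k)) b
  have hp := mod_pair hab h1 h2
  have : a * k + a * (b - k) = a * b := by
    rw [← Nat.mul_add, Nat.add_sub_cancel' h2.le]
  nlinarith [d1, d2, hp, this]

/-- F3: `2 U a b + (b-1) = (b-1) a`. -/
lemma hF3 {a b : ℕ} (ha : 0 < a) (hab : Nat.Coprime a b) :
    2 * U a b + (b - 1) = (b - 1) * a := by
  have hrefl : (∑ k ∈ Finset.Ico 1 b, (a * (b - k) / b)) = U a b := by
    have := sum_reflect b (fun x => a * x / b)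
    simpa [U] using this
  have : (∑ k ∈ Finset.Ico 1 b, (a * k / b + a * (b - k) / b + 1))
      = ∑ k ∈ Finset.Ico 1 b, a := by
    refine Finset.sum_congr rfl fun k hk => ?_
    simp only [Finset.mem_Ico] at hk
    exact div_pair ha hab hk.1 hk.2
  rw [Finset.sum_add_distrib, Finset.sum_add_distrib, hrefl, Finset.sum_const,
    Finset.sum_const, Nat.card_Ico, smul_eq_mul, smul_eq_mul, mul_one] at this
  have hUdef : (∑ k ∈ Finset.Ico 1 b, a * k / b) = U a b := rfl
  rw [hUdef] at this
  omega

/-- F2: swap lemma `Q a b + U a b + 2 T b a + 2 R1 a = 2 b R1 a`. -/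
lemma hF2 {a b : ℕ} (ha : 0 < a) (hb : 0 < b) (hab : Nat.Coprime a b) :
    Q a b + U a b + 2 * T b a + 2 * R1 a = 2 * (b * R1 a) := by
  -- pointwise: q² + q = 2 * ∑_{j ∈ Ico 1 a, j*b < a*k} j
  have step1 : ∀ k ∈ Finset.Ico 1 b,
      (a * k / b) ^ 2 + (a * k / b)
        = 2 * ∑ j ∈ Finset.Ico 1 a, (if j * b < a * k then j else 0) := by
    intro k hk
    simp only [Finset.mem_Ico] at hk
    have h1 : a * k < a * b := (Nat.mul_lt_mul_left ha).mpr hk.2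
    have hqa : a * k / b + 1 ≤ a := by
      exact Nat.div_lt_of_lt_mul (by rwa [mul_comm a b] at h1)
    have hiff : ∀ j, 1 ≤ j → (j * b < a * k ↔ j ≤ a * k / b) := by
      intro j hj
      constructor
      · intro h; exact (Nat.le_div_iff_mul_le hb).mpr h.le
      · intro h
        have h1 : j * b ≤ a * k := (Nat.le_div_iff_mul_le hb).mp h
        rcases lt_or_eq_of_le h1 with h2 | h2
        · exact h2
        · exfalso
          have hd : b ∣ a * k := ⟨j, by rw [← h2]; ring⟩
          have : b ∣ k := Nat.Coprime.dvd_of_dvd_mul_left hab.symm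
            (by rwa [mul_comm] at hd ⊢)
          have := Nat.le_of_dvd (by omega) this
          omega
    have hfilt : Finset.filter (fun j => j * b < a * k) (Finset.Ico 1 a)
        = Finset.Ico 1 (a * k / b + 1) := by
      ext j
      simp only [Finset.mem_filter, Finset.mem_Ico]
      constructor
      · rintro ⟨⟨hj1, hj2⟩, hjb⟩
        exact ⟨hj1, Nat.lt_succ_of_le ((hiff j hj1).mp hjb)⟩
      · rintro ⟨hj1, hj2⟩
        exact ⟨⟨hj1, Nat.lt_of_lt_of_le hj2 hqa⟩, (hiff j hj1).mpr (Nat.lt_succ_iff.mp hj2)⟩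
    rw [← Finset.sum_filter, hfilt]
    have := hR1 (a * k / b + 1)
    rw [R1] at this
    nlinarith [this]
  -- sum over k, then swap
  have hsumk : Q a b + U a b
      = 2 * ∑ j ∈ Finset.Ico 1 a, ∑ k ∈ Finset.Ico 1 b, (if j * b < a * k then j else 0) := by
    rw [Q, U, ← Finset.sum_add_distrib]
    rw [Finset.sum_congr rfl step1, ← Finset.mul_sum, Finset.sum_comm]
  -- inner sum over k for fixed j
  have step2 : ∀ j ∈ Finset.Ico 1 a,
      (∑ k ∈ Finset.Ico 1 b, (if j * b < a * k then j else 0)) + j * (j * b / a) + j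
        = j * b := by
    intro j hj
    simp only [Finset.mem_Ico] at hj
    have h1 : j * b < a * b := Nat.mul_lt_mul_of_lt_of_le hj.2 (le_refl b) hb
    have hdb : j * b / a + 1 ≤ b := by
      exact Nat.div_lt_of_lt_mul h1
    have hiff : ∀ k, (j * b < a * k ↔ j * b / a + 1 ≤ k) := by
      intro k
      constructor
      · intro h
        exact by rw [show j * b / a + 1 ≤ k ↔ j * b / a < k from Iff.rfl,
          Nat.div_lt_iff_lt_mul ha, mul_comm k a]; exact h
      · intro h
        have h2 : j * b / a < k := h
        rw [Nat.div_lt_iff_lt_mul ha, mul_comm k a] at h2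
        exact h2
    have hfilt : Finset.filter (fun k => j * b < a * k) (Finset.Ico 1 b)
        = Finset.Ico (j * b / a + 1) b := by
      ext k
      simp only [Finset.mem_filter, Finset.mem_Ico, hiff]
      generalize j * b / a = d
      omega
    rw [← Finset.sum_filter, hfilt, Finset.sum_const, Nat.card_Ico, smul_eq_mul]
    set d := j * b / a with hd
    obtain ⟨e, he⟩ := Nat.le.dest hdb
    rw [← he, Nat.add_sub_cancel_left]
    ring
  have hsumj := Finset.sum_congr rfl step2
  rw [Finset.sum_add_distrib, Finset.sum_add_distrib] at hsumj
  have e1 : (∑ j ∈ Finset.Ico 1 a, j * (j * b / a)) = T b a := by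
    rw [T]; exact Finset.sum_congr rfl fun j _ => by rw [mul_comm b j]
  have e2 : (∑ j ∈ Finset.Ico 1 a, j * b) = b * R1 a := by
    rw [R1, Finset.mul_sum]; exact Finset.sum_congr rfl fun j _ => by ring
  rw [e1, e2, ← R1] at hsumj
  omega
lemma saw_eq {x : ℝ} (h : Int.fract x ≠ 0) : saw x = Int.fract x - 1/2 := by
  rw [saw, if_neg h, Int.fract]

lemma saw_int (x : ℝ) (h : Int.fract x = 0) : saw x = 0 := by rw [saw, if_pos h]

lemma key1 (a b : ℕ) (hb : 0 < b) (hab : Nat.Coprime a b) :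
    12 * dedekindSum (a : ℤ) b * (b : ℝ) ^ 2 + 12 * (b : ℝ) * (T a b : ℝ) + 3 * (b : ℝ) ^ 3
      = 12 * (a : ℝ) * (R2 b : ℝ) + 3 * (b : ℝ) ^ 2 := by
  have hb0 : (b : ℝ) ≠ 0 := Nat.cast_ne_zero.mpr hb.ne'
  have hbpos : (0 : ℝ) < b := by positivity
  -- rewrite the sum over Icc 1 b, dropping the last term
  have hsplit : dedekindSum (a : ℤ) b
      = ∑ k ∈ Finset.Ico 1 b, saw ((k : ℝ) / b) * saw (((a : ℤ) : ℝ) * k / b) := by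
    rw [dedekindSum, ← Finset.Ico_add_one_right_eq_Icc, Finset.sum_Ico_succ_top (by omega)]
    have : ((b : ℝ) / b) = 1 := div_self hb0
    rw [this, saw_int 1 (by simp), zero_mul, add_zero]
  -- pointwise formula on Ico 1 b
  have hpt : ∀ k ∈ Finset.Ico 1 b,
      saw ((k : ℝ) / b) * saw (((a : ℤ) : ℝ) * k / b) * (12 * (b:ℝ)^2)
        = 12 * ((k * (a * k % b) : ℕ) : ℝ) - 6 * (b:ℝ) * (k : ℝ)
            - 6 * (b:ℝ) * ((a * k % b : ℕ) : ℝ) + 3 * (b:ℝ)^2 := by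
    intro k hk
    simp only [Finset.mem_Ico] at hk
    have hk0 : (0:ℝ) < k := by exact_mod_cast hk.1
    have hkb : (k:ℝ) < b := by exact_mod_cast hk.2
    have hfr1 : Int.fract ((k:ℝ)/b) = (k:ℝ)/b :=
      Int.fract_eq_self.mpr ⟨by positivity, by rw [div_lt_one hbpos]; exact hkb⟩
    have hfr1ne : Int.fract ((k:ℝ)/b) ≠ 0 := by
      rw [hfr1]; positivity
    have hm1 : 1 ≤ a * k % b := mod_ne_zero hab hk.1 hk.2
    have hmb : a * k % b < b := Nat.mod_lt _ hb
    have hm0 : (0:ℝ) < ((a * k % b : ℕ) : ℝ) := by exact_mod_cast hm1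
    have hmblt : (((a * k % b : ℕ)) : ℝ) < b := by exact_mod_cast hmb
    have hdm := Nat.div_add_mod (a * k) b
    have hdmR : (b:ℝ) * ((a * k / b : ℕ) : ℝ) + ((a * k % b : ℕ) : ℝ) = (a:ℝ) * k := by
      exact_mod_cast congrArg (Nat.cast : ℕ → ℝ) hdm
    have hx : ((a : ℤ) : ℝ) * k / b = ((a * k / b : ℕ) : ℝ) + ((a * k % b : ℕ) : ℝ) / b := by
      have hnum : ((a : ℤ) : ℝ) * k = (b:ℝ) * ((a * k / b : ℕ) : ℝ) + ((a * k % b : ℕ) : ℝ) := by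
        push_cast
        push_cast at hdmR
        linarith
      rw [hnum, add_div, mul_comm, mul_div_assoc, div_self hb0, mul_one]
    have hfr2 : Int.fract (((a : ℤ) : ℝ) * k / b) = ((a * k % b : ℕ) : ℝ) / b := by
      rw [hx, show ((a * k / b : ℕ) : ℝ) = (((a * k / b : ℕ) : ℤ) : ℝ) from
        (Int.cast_natCast _).symm, Int.fract_intCast_add]
      exact Int.fract_eq_self.mpr ⟨by positivity, by rw [div_lt_one hbpos]; exact hmblt⟩
    have hfr2ne : Int.fract (((a : ℤ) : ℝ) * k / b) ≠ 0 := by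
      rw [hfr2]; positivity
    rw [saw_eq hfr1ne, saw_eq hfr2ne, hfr1, hfr2]
    push_cast
    field_simp
    ring
  -- assemble
  have e0 : 12 * dedekindSum (a:ℤ) b * (b:ℝ)^2
      = ∑ k ∈ Finset.Ico 1 b, (saw ((k : ℝ) / b) * saw (((a : ℤ) : ℝ) * k / b) * (12 * (b:ℝ)^2)) := by
    rw [hsplit, ← Finset.sum_mul]
    ring
  rw [e0, Finset.sum_congr rfl hpt]
  rw [Finset.sum_add_distrib, Finset.sum_sub_distrib, Finset.sum_sub_distrib]
  have hA : (∑ k ∈ Finset.Ico 1 b, 12 * ((k * (a * k % b) : ℕ) : ℝ))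
      = 12 * ((∑ k ∈ Finset.Ico 1 b, k * (a * k % b) : ℕ) : ℝ) := by
    rw [Nat.cast_sum, Finset.mul_sum]
  have hB : (∑ k ∈ Finset.Ico 1 b, 6 * (b:ℝ) * (k:ℝ)) = 6 * (b:ℝ) * ((R1 b : ℕ) : ℝ) := by
    rw [R1, Nat.cast_sum, Finset.mul_sum]
  have hCn : (∑ k ∈ Finset.Ico 1 b, (a * k % b)) = R1 b := by
    have := sum_mod_bij hab (f := fun x => x) (b := b)
    simpa [R1] using this
  have hC : (∑ k ∈ Finset.Ico 1 b, 6 * (b:ℝ) * ((a * k % b : ℕ) : ℝ))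
      = 6 * (b:ℝ) * ((R1 b : ℕ) : ℝ) := by
    rw [← hCn, Nat.cast_sum, Finset.mul_sum]
  have hD : (∑ _k ∈ Finset.Ico 1 b, 3 * (b:ℝ)^2) = ((b - 1 : ℕ) : ℝ) * (3 * (b:ℝ)^2) := by
    rw [Finset.sum_const, Nat.card_Ico, nsmul_eq_mul]
  rw [hA, hB, hC, hD]
  -- number-theoretic input: N3 + b T = a R2
  have hN3 : a * R2 b = (∑ k ∈ Finset.Ico 1 b, k * (a * k % b)) + b * T a b := by
    rw [R2, T, Finset.mul_sum, Finset.mul_sum, ← Finset.sum_add_distrib]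
    refine Finset.sum_congr rfl fun k _ => ?_
    calc a * k ^ 2 = k * (a * k) := by ring
    _ = k * (b * (a * k / b) + a * k % b) := by rw [Nat.div_add_mod]
    _ = k * (a * k % b) + b * (k * (a * k / b)) := by ring
  have hN3R : (a:ℝ) * ((R2 b : ℕ) : ℝ)
      = ((∑ k ∈ Finset.Ico 1 b, k * (a * k % b) : ℕ) : ℝ) + (b:ℝ) * ((T a b : ℕ) : ℝ) := by
    exact_mod_cast congrArg (Nat.cast : ℕ → ℝ) hN3
  have hr1R : 2 * ((R1 b : ℕ) : ℝ) + (b:ℝ) = (b:ℝ) * (b:ℝ) := by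
    exact_mod_cast congrArg (Nat.cast : ℕ → ℝ) (hR1 b)
  have hbm1 : ((b - 1 : ℕ) : ℝ) = (b:ℝ) - 1 := by
    have : (1:ℕ) ≤ b := hb
    push_cast [Nat.cast_sub this]
    ring
  rw [hbm1]
  linear_combination (-12 : ℝ) * hN3R - 6 * (b:ℝ) * hr1R
end DedekindRecipAux

theorem stmt_1 (a b : ℕ) (ha : 0 < a) (hb : 0 < b) (hab : Nat.Coprime a b) :
    S (a : ℤ) b + S (b : ℤ) a = ((a : ℝ) ^ 2 + (b : ℝ) ^ 2 + 1) / ((a : ℝ) * b) - 3 := by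
  classical
  open DedekindRecipAux in
  have ha0 : (a:ℝ) ≠ 0 := Nat.cast_ne_zero.mpr ha.ne'
  have hb0 : (b:ℝ) ≠ 0 := Nat.cast_ne_zero.mpr hb.ne'
  have hab0 : (a:ℝ) * (b:ℝ) ≠ 0 := mul_ne_zero ha0 hb0
  have K1 := DedekindRecipAux.key1 a b hb hab
  have K2 := DedekindRecipAux.key1 b a ha hab.symm
  have F1R : (a:ℝ)^2 * (R2 b : ℝ) + (b:ℝ)^2 * (Q a b : ℝ)
      = (R2 b : ℝ) + 2 * ((a:ℝ) * ((b:ℝ) * (T a b : ℝ))) := by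
    exact_mod_cast congrArg (Nat.cast : ℕ → ℝ) (hF1 hab)
  have F2R : (Q a b : ℝ) + (U a b : ℝ) + 2 * (T b a : ℝ) + 2 * (R1 a : ℝ)
      = 2 * ((b:ℝ) * (R1 a : ℝ)) := by
    exact_mod_cast congrArg (Nat.cast : ℕ → ℝ) (hF2 ha hb hab)
  have F3R : 2 * (U a b : ℝ) + ((b:ℝ) - 1) = ((b:ℝ) - 1) * (a:ℝ) := by
    have := congrArg (Nat.cast : ℕ → ℝ) (hF3 ha hab)
    push_cast [Nat.cast_sub (by omega : 1 ≤ b)] at this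
    linarith
  have G1R : 2 * (R1 a : ℝ) + (a:ℝ) = (a:ℝ) * (a:ℝ) := by
    exact_mod_cast congrArg (Nat.cast : ℕ → ℝ) (hR1 a)
  have GbR : 6 * (R2 b : ℝ) + 3 * (b:ℝ)^2 = 2 * (b:ℝ)^3 + (b:ℝ) := by
    exact_mod_cast congrArg (Nat.cast : ℕ → ℝ) (hR2 b)
  have GaR : 6 * (R2 a : ℝ) + 3 * (a:ℝ)^2 = 2 * (a:ℝ)^3 + (a:ℝ) := by
    exact_mod_cast congrArg (Nat.cast : ℕ → ℝ) (hR2 a)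
  have hStepA : 2 * (a:ℝ) * (b:ℝ) * (T a b : ℝ) + 2 * (b:ℝ)^2 * (T b a : ℝ)
      = (a:ℝ) * (b:ℝ)^2 * ((a:ℝ) - 1) * ((b:ℝ) - 1) + ((a:ℝ)^2 - 1) * (R2 b : ℝ)
        - (b:ℝ)^2 * (U a b : ℝ) := by
    linear_combination (-1 : ℝ) * F1R + (b:ℝ)^2 * F2R + (b:ℝ)^2 * ((b:ℝ) - 1) * G1R
  have main : (12 * dedekindSum (a:ℤ) b + 12 * dedekindSum (b:ℤ) a) * ((a:ℝ) * (b:ℝ)) * ((a:ℝ) * (b:ℝ))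
      = ((a:ℝ)^2 + (b:ℝ)^2 + 1 - 3 * ((a:ℝ) * (b:ℝ))) * ((a:ℝ) * (b:ℝ)) := by
    linear_combination (a:ℝ)^2 * K1 + (b:ℝ)^2 * K2 - 6 * (a:ℝ) * hStepA
      + ((a:ℝ)^3 + (a:ℝ)) * GbR + 2 * (b:ℝ)^3 * GaR + 3 * (a:ℝ) * (b:ℝ)^2 * F3R
  have main2 : (12 * dedekindSum (a:ℤ) b + 12 * dedekindSum (b:ℤ) a) * ((a:ℝ) * (b:ℝ))
      = (a:ℝ)^2 + (b:ℝ)^2 + 1 - 3 * ((a:ℝ) * (b:ℝ)) :=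
    mul_right_cancel₀ hab0 main
  rw [S, S]
  rw [show ((a : ℝ) ^ 2 + (b : ℝ) ^ 2 + 1) / ((a : ℝ) * b) - 3
      = ((a:ℝ)^2 + (b:ℝ)^2 + 1 - 3 * ((a:ℝ) * (b:ℝ))) / ((a:ℝ) * (b:ℝ)) by
    field_simp]
  rw [eq_div_iff hab0]
  linear_combination main2
end

section
/- If a and b are coprime odd natural numbers, a* is an integer with a·a* ≡ 1 (mod b), and b* is an integer with b·b* ≡ 1 (mod a), then S(2a*, b) + S(2b*, a) = (a² + b² + 4)/(2·a·b) − 3. -/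
open Finset
lemma saw_eq (x : ℝ) : saw x = if Int.fract x = 0 then 0 else Int.fract x - 1/2 := by
  unfold saw Int.fract; ring_nf

lemma saw_add_int (x : ℝ) (n : ℤ) : saw (x + n) = saw x := by
  rw [saw_eq, saw_eq, Int.fract_add_intCast]

lemma fract_div (m : ℤ) (b : ℕ) (hb : 0 < b) :
    Int.fract ((m : ℝ) / b) = ((m % b : ℤ) : ℝ) / b := by
  have hb' : (0:ℝ) < b := by exact_mod_cast hb
  have h1 : (m : ℝ) / b = ((m % b : ℤ) : ℝ) / b + ((m / b : ℤ) : ℝ) := by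
    field_simp
    have h2 : m = m % b + b * (m / b) := (Int.emod_add_mul_ediv m b).symm
    have h3 : ((m:ℤ) : ℝ) = (((m % b + b * (m / b)) : ℤ) : ℝ) := by rw [← h2]
    push_cast at h3
    linarith
  rw [h1, Int.fract_add_intCast, Int.fract_eq_self.2 ⟨div_nonneg (by exact_mod_cast Int.emod_nonneg m (by exact_mod_cast hb.ne' : (b:ℤ) ≠ 0)) hb'.le, by
    rw [div_lt_one hb']
    exact_mod_cast Int.emod_lt_of_pos m (by exact_mod_cast hb)⟩]

lemma saw_div (m : ℤ) (b : ℕ) (hb : 0 < b) (hnd : ¬ ((b:ℤ) ∣ m)) :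
    saw ((m : ℝ) / b) = ((m % b : ℤ) : ℝ) / b - 1/2 := by
  have hb' : (0:ℝ) < b := by exact_mod_cast hb
  have h0 : 0 < m % b := by
    rcases (Int.emod_nonneg m (by exact_mod_cast hb.ne' : (b:ℤ) ≠ 0)).lt_or_eq with h | h
    · exact h
    · exact absurd (Int.dvd_of_emod_eq_zero h.symm) hnd
  have hne : ((m % b : ℤ) : ℝ) / b ≠ 0 := by
    apply div_ne_zero _ hb'.ne'
    exact_mod_cast h0.ne'
  rw [saw_eq, fract_div m b hb, if_neg hne]

lemma saw_div_congr (b : ℕ) (hb : 0 < b) {m n : ℤ} (h : (b:ℤ) ∣ (m - n)) :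
    saw ((m : ℝ) / b) = saw ((n : ℝ) / b) := by
  obtain ⟨t, ht⟩ := h
  have hbne : (b:ℝ) ≠ 0 := by positivity
  have h2 : (m : ℝ) / b = (n : ℝ) / b + t := by
    have h3 : (m:ℤ) = n + b * t := by linarith
    have h4 : ((m:ℤ):ℝ) = (((n + b*t):ℤ):ℝ) := by rw [← h3]
    push_cast at h4
    rw [h4]; field_simp
  rw [h2, saw_add_int]

lemma gauss1 (n : ℕ) : 2 * ∑ k ∈ Ico 1 n, (k:ℤ) = n * (n - 1) := by
  induction n with
  | zero => simp
  | succ n ih =>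
    rcases Nat.eq_zero_or_pos n with h | h
    · subst h; simp
    · rw [Finset.sum_Ico_succ_top (by omega : 1 ≤ n)]
      push_cast
      push_cast at ih
      ring_nf
      ring_nf at ih
      linarith

lemma gauss2 (n : ℕ) : 6 * ∑ k ∈ Ico 1 n, (k:ℤ)^2 = n * (n - 1) * (2*n - 1) := by
  induction n with
  | zero => simp
  | succ n ih =>
    rcases Nat.eq_zero_or_pos n with h | h
    · subst h; simp
    · rw [Finset.sum_Ico_succ_top (by omega : 1 ≤ n)]
      push_cast
      push_cast at ih
      ring_nf
      ring_nf at ih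
      linarith

lemma perm_sum {M : Type*} [AddCommMonoid M] (a b : ℕ) (hab : Nat.Coprime a b) (f : ℕ → M) :
    ∑ k ∈ Ico 1 b, f (a * k % b) = ∑ k ∈ Ico 1 b, f k := by
  rcases Nat.lt_or_ge b 2 with hb | hb
  · interval_cases b <;> simp
  obtain ⟨c, -, hc⟩ := Nat.exists_mul_mod_eq_one_of_coprime hab hb
  have hb0 : 0 < b := by omega
  have key : ∀ x y : ℕ, x * y % b = 1 → ∀ k ∈ Ico 1 b, y * (x * k % b) % b = k := by
    intro x y hxy k hk
    rw [Finset.mem_Ico] at hk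
    have h1 : y * (x * k % b) ≡ y * (x * k) [MOD b] := Nat.ModEq.mul_left y (Nat.mod_modEq _ _)
    have h2 : y * (x * k) = (x * y) * k := by ring
    have h3 : (x * y) * k ≡ 1 * k [MOD b] := Nat.ModEq.mul_right k (by
      calc x * y ≡ x * y % b [MOD b] := (Nat.mod_modEq _ _).symm
        _ = 1 := hxy)
    have h4 : y * (x * k % b) ≡ k [MOD b] := by
      calc y * (x * k % b) ≡ y * (x * k) [MOD b] := h1
        _ = (x * y) * k := h2
        _ ≡ 1 * k [MOD b] := h3
        _ = k := one_mul k
    unfold Nat.ModEq at h4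
    rwa [Nat.mod_eq_of_lt hk.2] at h4
  have hca : c * a % b = 1 := by rwa [mul_comm] at hc
  refine Finset.sum_nbij' (fun k => a * k % b) (fun k => c * k % b) ?_ ?_ ?_ ?_ ?_
  · intro k hk
    rw [Finset.mem_Ico] at hk ⊢
    refine ⟨?_, Nat.mod_lt _ hb0⟩
    rcases Nat.eq_zero_or_pos (a * k % b) with h0 | h0
    · exfalso
      have := key a c hc k (Finset.mem_Ico.2 hk)
      rw [h0] at this
      simp at this
      omega
    · exact h0
  · intro k hk
    rw [Finset.mem_Ico] at hk ⊢
    refine ⟨?_, Nat.mod_lt _ hb0⟩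
    rcases Nat.eq_zero_or_pos (c * k % b) with h0 | h0
    · exfalso
      have := key c a hca k (Finset.mem_Ico.2 hk)
      rw [h0] at this
      simp at this
      omega
    · exact h0
  · intro k hk; exact key a c hc k hk
  · intro k hk; exact key c a hca k hk
  · intro k hk; rfl

-- integer sums
def K1s (b : ℕ) : ℤ := ∑ k ∈ Ico 1 b, (k:ℤ)
def K2s (b : ℕ) : ℤ := ∑ k ∈ Ico 1 b, (k:ℤ)^2
def Kq (a b : ℕ) : ℤ := ∑ k ∈ Ico 1 b, ((a*k/b : ℕ) : ℤ)
def Fq (a b : ℕ) : ℤ := ∑ k ∈ Ico 1 b, (k:ℤ) * ((a*k/b : ℕ) : ℤ)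
def Sq (a b : ℕ) : ℤ := ∑ k ∈ Ico 1 b, ((a*k/b : ℕ) : ℤ)^2
def QRq (a b : ℕ) : ℤ := ∑ k ∈ Ico 1 b, ((a*k/b : ℕ) : ℤ) * ((a*k % b : ℕ) : ℤ)
def Rr (a b : ℕ) : ℤ := ∑ k ∈ Ico 1 b, (k:ℤ) * ((a*k % b : ℕ) : ℤ)

lemma perm_r (a b : ℕ) (hab : Nat.Coprime a b) :
    ∑ k ∈ Ico 1 b, ((a*k % b : ℕ) : ℤ) = K1s b :=
  perm_sum a b hab (fun m => (m:ℤ))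

lemma perm_r2 (a b : ℕ) (hab : Nat.Coprime a b) :
    ∑ k ∈ Ico 1 b, ((a*k % b : ℕ) : ℤ)^2 = K2s b :=
  perm_sum a b hab (fun m => (m:ℤ)^2)

lemma div_add_mod_int (a b k : ℕ) : (a:ℤ)*k = b * ((a*k/b : ℕ):ℤ) + ((a*k % b : ℕ):ℤ) := by
  exact_mod_cast congrArg (Nat.cast : ℕ → ℤ) (Nat.div_add_mod (a*k) b).symm

lemma e1 (a b : ℕ) (hab : Nat.Coprime a b) : (a:ℤ) * K1s b = b * Kq a b + K1s b := by
  have hp := perm_r a b hab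
  unfold K1s Kq
  unfold K1s at hp
  calc (a:ℤ) * ∑ k ∈ Ico 1 b, (k:ℤ) = ∑ k ∈ Ico 1 b, (a:ℤ)*k := Finset.mul_sum _ _ _
    _ = ∑ k ∈ Ico 1 b, ((b:ℤ) * ((a*k/b : ℕ):ℤ) + ((a*k % b : ℕ):ℤ)) :=
        Finset.sum_congr rfl fun k _ => div_add_mod_int a b k
    _ = (b:ℤ) * ∑ k ∈ Ico 1 b, ((a*k/b : ℕ):ℤ) + ∑ k ∈ Ico 1 b, ((a*k % b : ℕ):ℤ) := by
        rw [Finset.sum_add_distrib, Finset.mul_sum]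
    _ = (b:ℤ) * ∑ k ∈ Ico 1 b, ((a*k/b : ℕ):ℤ) + ∑ k ∈ Ico 1 b, (k:ℤ) := by rw [hp]

lemma e2 (a b : ℕ) (hab : Nat.Coprime a b) : (a:ℤ) * K2s b = b * Fq a b + Rr a b := by
  unfold K2s Fq Rr
  rw [Finset.mul_sum, Finset.mul_sum, ← Finset.sum_add_distrib]
  refine Finset.sum_congr rfl fun k _ => ?_
  have h := div_add_mod_int a b k
  linear_combination (k:ℤ) * h

lemma e3 (a b : ℕ) (hab : Nat.Coprime a b) :
    (a:ℤ)^2 * K2s b = b^2 * Sq a b + 2*b*QRq a b + K2s b := by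
  nth_rewrite 2 [← perm_r2 a b hab]
  unfold K2s Sq QRq
  rw [Finset.mul_sum, Finset.mul_sum, Finset.mul_sum, ← Finset.sum_add_distrib, ← Finset.sum_add_distrib]
  refine Finset.sum_congr rfl fun k _ => ?_
  have h := div_add_mod_int a b k
  linear_combination ((a:ℤ)*k + (b:ℤ) * ((a*k/b : ℕ):ℤ) + ((a*k % b : ℕ):ℤ)) * h

lemma e4 (a b : ℕ) (hab : Nat.Coprime a b) :
    (a:ℤ) * Fq a b = b * Sq a b + QRq a b := by
  unfold Fq Sq QRq
  rw [Finset.mul_sum, Finset.mul_sum, ← Finset.sum_add_distrib]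
  refine Finset.sum_congr rfl fun k _ => ?_
  have h := div_add_mod_int a b k
  linear_combination ((a*k/b : ℕ):ℤ) * h

-- filter lemma: for 1 ≤ j < a, coprime a b:
lemma filt (a b j : ℕ) (hab : Nat.Coprime a b) (ha : 0 < a) (hj1 : 1 ≤ j) (hj2 : j < a) :
    (Ico 1 b).filter (fun k => a*k < b*j) = Ico 1 (b*j/a + 1) := by
  ext k
  simp only [Finset.mem_filter, Finset.mem_Ico]
  constructor
  · rintro ⟨⟨hk1, hk2⟩, hlt⟩
    refine ⟨hk1, ?_⟩
    have h1 : a*k ≤ b*j := le_of_lt hlt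
    have h2 : k ≤ b*j/a := (Nat.le_div_iff_mul_le ha).2 (by rw [mul_comm]; exact h1)
    omega
  · rintro ⟨hk1, hk2⟩
    have hkle : k ≤ b*j/a := by omega
    have h1 : k * a ≤ b * j := (Nat.le_div_iff_mul_le ha).1 hkle
    have hne : a * k ≠ b * j := by
      intro he
      have hdvd : a ∣ b * j := ⟨k, he.symm⟩
      have : a ∣ j := (Nat.Coprime.dvd_of_dvd_mul_left hab hdvd)
      have := Nat.le_of_dvd (by omega) this
      omega
    have hlt : a * k < b * j := by rw [mul_comm] at h1; omega
    refine ⟨⟨hk1, ?_⟩, hlt⟩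
    by_contra hkb
    push_neg at hkb
    have hk' : (b:ℤ) ≤ k := by exact_mod_cast hkb
    have hj' : (j:ℤ) ≤ (a:ℤ) - 1 := by
      have : (j:ℤ) < a := by exact_mod_cast hj2
      omega
    have hlt' : (a:ℤ)*k < (b:ℤ)*j := by exact_mod_cast hlt
    have hb' : (1:ℤ) ≤ b := by
      have : 0 < b := by
        rcases Nat.eq_zero_or_pos b with h|h
        · subst h; simp at hlt
        · exact h
      exact_mod_cast this
    have c1 : (a:ℤ)*b ≤ (a:ℤ)*k := mul_le_mul_of_nonneg_left hk' (by positivity)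
    have c2 : (b:ℤ)*j ≤ (b:ℤ)*((a:ℤ)-1) := mul_le_mul_of_nonneg_left hj' (by positivity)
    nlinarith

lemma tricho (a b j k : ℕ) (hab : Nat.Coprime a b) (hk1 : 1 ≤ k) (hk2 : k < b) :
    a * k ≠ b * j := by
  intro he
  have hdvd : b ∣ a * k := ⟨j, he⟩
  have : b ∣ k := (Nat.Coprime.dvd_of_dvd_mul_left (Nat.Coprime.symm hab) hdvd)
  have := Nat.le_of_dvd (by omega) this
  omega

lemma estar (a b : ℕ) (ha : 0 < a) (hb : 0 < b) (hab : Nat.Coprime a b) :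
    2 * Fq b a = (a:ℤ)*(a-1)*(b-1) - Sq a b - Kq a b := by
  have hF : Fq b a = ∑ j ∈ Ico 1 a, ∑ k ∈ Ico 1 b, (if a*k < b*j then (j:ℤ) else 0) := by
    unfold Fq
    refine Finset.sum_congr rfl fun j hj => ?_
    rw [Finset.mem_Ico] at hj
    have hcard : ((Ico 1 b).filter (fun k => a*k < b*j)).card = b*j/a := by
      rw [filt a b j hab ha hj.1 hj.2, Nat.card_Ico, Nat.add_sub_cancel]
    rw [← Finset.sum_filter, Finset.sum_const, hcard, nsmul_eq_mul]
    push_cast; ring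
  have hSK : Sq a b + Kq a b = 2 * ∑ k ∈ Ico 1 b, ∑ j ∈ Ico 1 a, (if b*j < a*k then (j:ℤ) else 0) := by
    unfold Sq Kq
    rw [← Finset.sum_add_distrib, Finset.mul_sum]
    refine Finset.sum_congr rfl fun k hk => ?_
    rw [Finset.mem_Ico] at hk
    have hfilt : (Ico 1 a).filter (fun j => b*j < a*k) = Ico 1 (a*k/b + 1) :=
      filt b a k hab.symm hb hk.1 hk.2
    rw [← Finset.sum_filter, hfilt]
    have := gauss1 (a*k/b + 1)
    push_cast at this ⊢
    linarith
  have hswap : (∑ k ∈ Ico 1 b, ∑ j ∈ Ico 1 a, (if b*j < a*k then (j:ℤ) else 0))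
      = ∑ j ∈ Ico 1 a, ∑ k ∈ Ico 1 b, (if b*j < a*k then (j:ℤ) else 0) := Finset.sum_comm
  have hcomb : (∑ j ∈ Ico 1 a, ∑ k ∈ Ico 1 b, (if a*k < b*j then (j:ℤ) else 0))
      + ∑ j ∈ Ico 1 a, ∑ k ∈ Ico 1 b, (if b*j < a*k then (j:ℤ) else 0)
      = ∑ j ∈ Ico 1 a, ((b:ℤ)-1) * j := by
    rw [← Finset.sum_add_distrib]
    refine Finset.sum_congr rfl fun j hj => ?_
    rw [← Finset.sum_add_distrib]
    have hpt : ∀ k ∈ Ico 1 b, ((if a*k < b*j then (j:ℤ) else 0) + if b*j < a*k then (j:ℤ) else 0) = (j:ℤ) := by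
      intro k hk
      rw [Finset.mem_Ico] at hk
      have hne := tricho a b j k hab hk.1 hk.2
      rcases lt_trichotomy (a*k) (b*j) with h | h | h
      · rw [if_pos h, if_neg (by omega)]; ring
      · exact absurd h hne
      · rw [if_neg (by omega), if_pos h]; ring
    rw [Finset.sum_congr rfl hpt, Finset.sum_const, Nat.card_Ico, nsmul_eq_mul]
    have hbk : ((b - 1 : ℕ) : ℤ) = (b:ℤ) - 1 := by
      have : 1 ≤ b := hb
      push_cast [this]; ring
    rw [hbk]
  have hg : 2 * ∑ j ∈ Ico 1 a, (j:ℤ) = (a:ℤ) * ((a:ℤ)-1) := by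
    have := gauss1 a; push_cast at this ⊢; linarith
  have hfin : ∑ j ∈ Ico 1 a, ((b:ℤ)-1) * j = ((b:ℤ)-1) * ∑ j ∈ Ico 1 a, (j:ℤ) := by
    rw [Finset.mul_sum]
  have : 2 * Fq b a + (Sq a b + Kq a b)
      = 2 * ((∑ j ∈ Ico 1 a, ∑ k ∈ Ico 1 b, (if a*k < b*j then (j:ℤ) else 0))
        + ∑ j ∈ Ico 1 a, ∑ k ∈ Ico 1 b, (if b*j < a*k then (j:ℤ) else 0)) := by
    rw [hF, hSK, hswap]; ring
  rw [hcomb, hfin] at this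
  nlinarith [this, hg]

noncomputable def s1 (a : ℤ) (b : ℕ) : ℝ :=
  ∑ k ∈ Ico 1 b, saw ((k : ℝ) / b) * saw ((a : ℝ) * k / b)

lemma not_dvd_ak (a b k : ℕ) (hab : Nat.Coprime a b) (hk1 : 1 ≤ k) (hk2 : k < b) :
    ¬ ((b:ℤ) ∣ ((a:ℤ)*k)) := by
  intro h
  have h' : b ∣ a * k := by exact_mod_cast h
  have : b ∣ k := Nat.Coprime.dvd_of_dvd_mul_left (Nat.Coprime.symm hab) h'
  have := Nat.le_of_dvd (by omega) this
  omega

lemma saw_k_div (b k : ℕ) (hk1 : 1 ≤ k) (hk2 : k < b) :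
    saw ((k:ℝ)/b) = (k:ℝ)/b - 1/2 := by
  have hb : 0 < b := by omega
  have h := saw_div (k:ℤ) b hb (by
    intro hd
    have : (b:ℤ) ≤ k := Int.le_of_dvd (by exact_mod_cast hk1) hd
    have : b ≤ k := by exact_mod_cast this
    omega)
  have hmod : ((k:ℤ) % b) = (k:ℤ) := Int.emod_eq_of_lt (by positivity) (by exact_mod_cast hk2)
  rw [hmod] at h
  push_cast at h
  exact h

lemma saw_ak_div (a b k : ℕ) (hab : Nat.Coprime a b) (hk1 : 1 ≤ k) (hk2 : k < b) :
    saw ((a:ℝ)*k/b) = ((a*k % b : ℕ):ℝ)/b - 1/2 := by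
  have hb : 0 < b := by omega
  have h := saw_div ((a:ℤ)*k) b hb (not_dvd_ak a b k hab hk1 hk2)
  have h1 : (((a:ℤ)*k) % b) = ((a*k % b : ℕ) : ℤ) := by
    push_cast
    rfl
  rw [h1] at h
  have h2 : (((a:ℤ)*k : ℤ):ℝ) = (a:ℝ)*k := by push_cast; ring
  rw [h2] at h
  exact h

lemma perm_rR (a b : ℕ) (hab : Nat.Coprime a b) :
    ∑ k ∈ Ico 1 b, ((a*k % b : ℕ) : ℝ) = ∑ k ∈ Ico 1 b, (k:ℝ) :=
  perm_sum a b hab (fun m => (m:ℝ))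

lemma s1_eq (a b : ℕ) (hb : 0 < b) (hab : Nat.Coprime a b) :
    s1 a b = (Rr a b : ℝ)/b^2 - (K1s b : ℝ)/b + ((b:ℝ)-1)/4 := by
  have hb' : (0:ℝ) < b := by exact_mod_cast hb
  unfold s1
  have hpt : ∀ k ∈ Ico 1 b, saw ((k:ℝ)/b) * saw (((a:ℤ):ℝ) * k / b)
      = ((k:ℝ) * ((a*k % b : ℕ):ℝ))/b^2 - (k:ℝ)/(2*b) - ((a*k % b : ℕ):ℝ)/(2*b) + 1/4 := by
    intro k hk
    rw [Finset.mem_Ico] at hk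
    rw [saw_k_div b k hk.1 hk.2]
    have := saw_ak_div a b k hab hk.1 hk.2
    rw [show ((a:ℤ):ℝ) = (a:ℝ) by push_cast; rfl, this]
    field_simp
    ring
  rw [Finset.sum_congr rfl hpt]
  have hR : ((Rr a b : ℤ):ℝ) = ∑ k ∈ Ico 1 b, (k:ℝ) * ((a*k%b : ℕ):ℝ) := by
    unfold Rr; push_cast; rfl
  have hK : ((K1s b : ℤ):ℝ) = ∑ k ∈ Ico 1 b, (k:ℝ) := by
    unfold K1s; push_cast; rfl
  have hcard : ((Ico 1 b).card : ℝ) = (b:ℝ) - 1 := by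
    rw [Nat.card_Ico]
    have : 1 ≤ b := hb
    push_cast [this]; ring
  simp only [Finset.sum_add_distrib, Finset.sum_sub_distrib, ← Finset.sum_div, Finset.sum_const,
    nsmul_eq_mul, mul_one]
  rw [← hR, ← hK, hcard]
  rw [show (∑ k ∈ Ico 1 b, ((a*k%b : ℕ):ℝ)) = ∑ k ∈ Ico 1 b, (k:ℝ) from perm_rR a b hab, ← hK]
  field_simp
  ring

lemma g1K (b : ℕ) : 2 * K1s b = (b:ℤ)*((b:ℤ)-1) := gauss1 b
lemma g2K (b : ℕ) : 6 * K2s b = (b:ℤ)*((b:ℤ)-1)*(2*(b:ℤ)-1) := gauss2 b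

lemma recip (a b : ℕ) (ha : 0 < a) (hb : 0 < b) (hab : Nat.Coprime a b) :
    s1 a b + s1 b a = -1/4 + ((a:ℝ)^2+(b:ℝ)^2+1)/(12*(a:ℝ)*(b:ℝ)) := by
  have hA0 : (a:ℝ) ≠ 0 := by positivity
  have hB0 : (b:ℝ) ≠ 0 := by positivity
  -- real versions of all integer identities
  have g1 : 2*((K1s b :ℤ):ℝ) = (b:ℝ)*((b:ℝ)-1) := by exact_mod_cast congrArg (Int.cast : ℤ → ℝ) (g1K b)
  have g2 : 6*((K2s b :ℤ):ℝ) = (b:ℝ)*((b:ℝ)-1)*(2*(b:ℝ)-1) := by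
    exact_mod_cast congrArg (Int.cast : ℤ → ℝ) (g2K b)
  have g1' : 2*((K1s a :ℤ):ℝ) = (a:ℝ)*((a:ℝ)-1) := by exact_mod_cast congrArg (Int.cast : ℤ → ℝ) (g1K a)
  have g2' : 6*((K2s a :ℤ):ℝ) = (a:ℝ)*((a:ℝ)-1)*(2*(a:ℝ)-1) := by
    exact_mod_cast congrArg (Int.cast : ℤ → ℝ) (g2K a)
  have he1 : (a:ℝ)*((K1s b:ℤ):ℝ) = (b:ℝ)*((Kq a b:ℤ):ℝ) + ((K1s b:ℤ):ℝ) := by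
    exact_mod_cast congrArg (Int.cast : ℤ → ℝ) (e1 a b hab)
  have he2 : (a:ℝ)*((K2s b:ℤ):ℝ) = (b:ℝ)*((Fq a b:ℤ):ℝ) + ((Rr a b:ℤ):ℝ) := by
    exact_mod_cast congrArg (Int.cast : ℤ → ℝ) (e2 a b hab)
  have he2' : (b:ℝ)*((K2s a:ℤ):ℝ) = (a:ℝ)*((Fq b a:ℤ):ℝ) + ((Rr b a:ℤ):ℝ) := by
    exact_mod_cast congrArg (Int.cast : ℤ → ℝ) (e2 b a hab.symm)
  have he3 : (a:ℝ)^2*((K2s b:ℤ):ℝ) = (b:ℝ)^2*((Sq a b:ℤ):ℝ) + 2*(b:ℝ)*((QRq a b:ℤ):ℝ) + ((K2s b:ℤ):ℝ) := by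
    exact_mod_cast congrArg (Int.cast : ℤ → ℝ) (e3 a b hab)
  have he4 : (a:ℝ)*((Fq a b:ℤ):ℝ) = (b:ℝ)*((Sq a b:ℤ):ℝ) + ((QRq a b:ℤ):ℝ) := by
    exact_mod_cast congrArg (Int.cast : ℤ → ℝ) (e4 a b hab)
  have hstar : 2*((Fq b a:ℤ):ℝ) = (a:ℝ)*((a:ℝ)-1)*((b:ℝ)-1) - ((Sq a b:ℤ):ℝ) - ((Kq a b:ℤ):ℝ) := by
    exact_mod_cast congrArg (Int.cast : ℤ → ℝ) (estar a b ha hb hab)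
  have hs := s1_eq a b hb hab
  have hs' := s1_eq b a ha hab.symm
  rw [hs, hs']
  have hk1 : ((K1s b:ℤ):ℝ) = (b:ℝ)*((b:ℝ)-1)/2 := by linarith
  have hk2 : ((K2s b:ℤ):ℝ) = (b:ℝ)*((b:ℝ)-1)*(2*(b:ℝ)-1)/6 := by linarith
  have hk1' : ((K1s a:ℤ):ℝ) = (a:ℝ)*((a:ℝ)-1)/2 := by linarith
  have hk2' : ((K2s a:ℤ):ℝ) = (a:ℝ)*((a:ℝ)-1)*(2*(a:ℝ)-1)/6 := by linarith
  have hkq : ((Kq a b:ℤ):ℝ) = ((a:ℝ)-1)*((b:ℝ)-1)/2 := by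
    apply mul_left_cancel₀ hB0
    rw [hk1] at he1
    linear_combination -he1
  have hsq : ((Sq a b:ℤ):ℝ) = (2*(a:ℝ)*(b:ℝ)*((Fq a b:ℤ):ℝ) + ((K2s b:ℤ):ℝ) - (a:ℝ)^2*((K2s b:ℤ):ℝ))/(b:ℝ)^2 := by
    rw [eq_div_iff (pow_ne_zero 2 hB0)]
    linear_combination he3 - 2*(b:ℝ)*he4
  have hr : ((Rr a b:ℤ):ℝ) = (a:ℝ)*((K2s b:ℤ):ℝ) - (b:ℝ)*((Fq a b:ℤ):ℝ) := by linear_combination -he2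
  have hf' : ((Fq b a:ℤ):ℝ) = ((a:ℝ)*((a:ℝ)-1)*((b:ℝ)-1) - ((Sq a b:ℤ):ℝ) - ((Kq a b:ℤ):ℝ))/2 := by
    linear_combination hstar / 2
  have hr' : ((Rr b a:ℤ):ℝ) = (b:ℝ)*((K2s a:ℤ):ℝ) - (a:ℝ)*((Fq b a:ℤ):ℝ) := by linear_combination -he2'
  rw [hr, hr', hf', hsq, hkq, hk1, hk2, hk1', hk2']
  field_simp
  ring

noncomputable def Vv (a b : ℕ) : ℝ :=
  ∑ k ∈ Ico 1 b, if b < 2*k then saw ((a:ℝ)*k/b) else 0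

lemma saw_r_eq (a b k : ℕ) (hb : 0 < b) :
    saw (((a*k % b : ℕ):ℝ)/b) = saw ((a:ℝ)*k/b) := by
  have hd : (b:ℤ) ∣ (((a*k % b : ℕ):ℤ) - ((a*k:ℕ):ℤ)) := by
    refine ⟨-(((a*k:ℕ):ℤ)/b), ?_⟩
    have h1 : ((a*k % b : ℕ):ℤ) = ((a*k:ℕ):ℤ) % b := by push_cast; rfl
    rw [h1]
    linear_combination (Int.emod_add_mul_ediv ((a*k:ℕ):ℤ) b)
  have h2 := saw_div_congr b hb hd
  have h3 : (((a*k:ℕ):ℤ):ℝ) = (a:ℝ)*k := by push_cast; ring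
  have h4 : (((a*k % b:ℕ):ℤ):ℝ) = ((a*k % b:ℕ):ℝ) := by norm_cast
  rw [h3, h4] at h2
  exact h2

lemma sum_saw_ak (a b : ℕ) (hb : 0 < b) (hab : Nat.Coprime a b) :
    ∑ k ∈ Ico 1 b, saw ((a:ℝ)*k/b) = 0 := by
  have h1 : ∑ k ∈ Ico 1 b, saw ((a:ℝ)*k/b) = ∑ k ∈ Ico 1 b, saw (((k:ℕ):ℝ)/b) := by
    rw [← perm_sum a b hab (fun m => saw ((m:ℝ)/b))]
    exact Finset.sum_congr rfl fun k hk => (saw_r_eq a b k hb).symm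
  rw [h1]
  have h2 : ∀ k ∈ Ico 1 b, saw (((k:ℕ):ℝ)/b) = (k:ℝ)/b - 1/2 := by
    intro k hk
    rw [Finset.mem_Ico] at hk
    exact saw_k_div b k hk.1 hk.2
  rw [Finset.sum_congr rfl h2, Finset.sum_sub_distrib, ← Finset.sum_div]
  have g1 : 2*((K1s b :ℤ):ℝ) = (b:ℝ)*((b:ℝ)-1) := by exact_mod_cast congrArg (Int.cast : ℤ → ℝ) (g1K b)
  have hK : ((K1s b : ℤ):ℝ) = ∑ k ∈ Ico 1 b, (k:ℝ) := by unfold K1s; push_cast; rfl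
  rw [← hK, Finset.sum_const, nsmul_eq_mul, Nat.card_Ico]
  have hb1 : ((b-1:ℕ):ℝ) = (b:ℝ)-1 := by
    have : 1 ≤ b := hb
    push_cast [this]; ring
  rw [hb1]
  have hb' : (0:ℝ) < b := by exact_mod_cast hb
  field_simp
  linarith

lemma doubling (a b : ℕ) (hb0 : 0 < b) (hbodd : Odd b) (hab : Nat.Coprime a b) (c : ℤ)
    (hc : (b:ℤ) ∣ ((a:ℤ)*c - 2)) :
    s1 c b = 2 * s1 a b - Vv a b := by
  have hb' : (0:ℝ) < b := by exact_mod_cast hb0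
  have h1 : s1 c b = ∑ k ∈ Ico 1 b, saw (((a*k % b : ℕ):ℝ)/b) * saw ((c:ℝ) * ((a*k % b:ℕ):ℝ)/b) :=
    (perm_sum a b hab (fun m => saw ((m:ℝ)/b) * saw ((c:ℝ)*m/b))).symm
  have h2 : ∀ k ∈ Ico 1 b, saw ((c:ℝ) * ((a*k % b:ℕ):ℝ)/b) = saw (((2*k:ℕ):ℝ)/b) := by
    intro k hk
    have hr : ((a*k % b : ℕ):ℤ) = ((a*k:ℕ):ℤ) % b := by push_cast; rfl
    have hd : (b:ℤ) ∣ (c * ((a*k % b : ℕ):ℤ) - ((2*k:ℕ):ℤ)) := by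
      have hX : ((a*k:ℕ):ℤ) = (a:ℤ)*k := by push_cast; ring
      have hd1 : (b:ℤ) ∣ (((a*k % b : ℕ):ℤ) - (a:ℤ)*k) := by
        refine ⟨-(((a*k:ℕ):ℤ)/b), ?_⟩
        rw [hr, ← hX]
        linear_combination (Int.emod_add_mul_ediv ((a*k:ℕ):ℤ) b)
      have key : c * ((a*k % b : ℕ):ℤ) - ((2*k:ℕ):ℤ)
          = c * (((a*k % b : ℕ):ℤ) - (a:ℤ)*k) + k * ((a:ℤ)*c - 2) := by push_cast; ring
      rw [key]
      exact dvd_add (Dvd.dvd.mul_left hd1 c) (Dvd.dvd.mul_left hc k)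
    have h5 := saw_div_congr b hb0 hd
    have h6 : ((c * ((a*k % b : ℕ):ℤ) : ℤ):ℝ) = (c:ℝ) * ((a*k % b:ℕ):ℝ) := by
      rw [Int.cast_mul, Int.cast_natCast]
    have h7 : (((2*k:ℕ):ℤ):ℝ) = ((2*k:ℕ):ℝ) := by norm_cast
    rw [h6, h7] at h5
    exact h5
  have h3 : ∀ k ∈ Ico 1 b, saw (((2*k:ℕ):ℝ)/b)
      = 2*((k:ℝ)/b - 1/2) + 1/2 - (if b < 2*k then 1 else 0) := by
    intro k hk
    rw [Finset.mem_Ico] at hk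
    have hnd : ¬ ((b:ℤ) ∣ ((2*k:ℕ):ℤ)) := by
      intro hdvd
      have hdn : b ∣ 2*k := by exact_mod_cast hdvd
      have h2b : ¬ (2 ∣ b) := by rcases hbodd with ⟨t, ht⟩; omega
      have hcop : Nat.Coprime b 2 := ((Nat.prime_two.coprime_iff_not_dvd).2 h2b).symm
      have hbk : b ∣ k := hcop.dvd_of_dvd_mul_left hdn
      have := Nat.le_of_dvd (by omega) hbk
      omega
    have := saw_div ((2*k:ℕ):ℤ) b hb0 hnd
    have hcast : ((((2*k:ℕ):ℤ)):ℝ) = 2*(k:ℝ) := by push_cast; ring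
    rw [hcast] at this
    rw [show (((2*k:ℕ)):ℝ) = 2*(k:ℝ) by push_cast; ring]
    rw [this]
    have hmod : (((2*k:ℕ):ℤ) % b) = if b < 2*k then ((2*k:ℕ):ℤ) - b else ((2*k:ℕ):ℤ) := by
      have h2k : ((2*k:ℕ):ℤ) = 2*(k:ℤ) := by push_cast; ring
      have hne : 2*k ≠ b := by
        intro he
        rcases hbodd with ⟨t, ht⟩
        omega
      split_ifs with hsp
      · have hlt : ((2*k:ℕ):ℤ) - b < b := by push_cast; omega
        have hge : 0 ≤ ((2*k:ℕ):ℤ) - b := by push_cast; omega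
        have heq : (((2*k:ℕ):ℤ) - b) % b = ((2*k:ℕ):ℤ) % b := Int.sub_emod_right _ _
        rw [← heq, Int.emod_eq_of_lt hge hlt]
      · have hlt : ((2*k:ℕ):ℤ) < b := by push_cast; omega
        exact Int.emod_eq_of_lt (by positivity) hlt
    rw [hmod]
    split_ifs with hsp <;> [skip; skip] <;> (push_cast; field_simp; try ring)
  -- combine
  rw [h1]
  have h4 : ∀ k ∈ Ico 1 b, saw (((a*k % b : ℕ):ℝ)/b) * saw ((c:ℝ) * ((a*k % b:ℕ):ℝ)/b)
      = 2*(saw ((k:ℝ)/b) * saw ((a:ℝ)*k/b)) + (1/2) * saw ((a:ℝ)*k/b)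
        - (if b < 2*k then saw ((a:ℝ)*k/b) else 0) := by
    intro k hk
    rw [saw_r_eq a b k hb0, h2 k hk, h3 k hk]
    rw [Finset.mem_Ico] at hk
    rw [saw_k_div b k hk.1 hk.2]
    split_ifs <;> ring
  rw [Finset.sum_congr rfl h4]
  rw [Finset.sum_sub_distrib, Finset.sum_add_distrib, ← Finset.mul_sum, ← Finset.mul_sum]
  rw [sum_saw_ak a b hb0 hab]
  have hs1 : ∑ k ∈ Ico 1 b, saw ((k:ℝ)/b) * saw ((a:ℝ)*k/b) = s1 a b := by
    unfold s1
    refine Finset.sum_congr rfl fun k hk => ?_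
    rw [show (((a:ℕ):ℤ):ℝ) = (a:ℝ) by push_cast; rfl]
  rw [hs1]
  unfold Vv
  ring

lemma sum_reflect {M : Type*} [AddCommMonoid M] (a : ℕ) (h : ℕ → M) :
    ∑ j ∈ Ico 1 a, h j = ∑ j ∈ Ico 1 a, h (a - j) := by
  refine Finset.sum_nbij' (fun j => a - j) (fun j => a - j) ?_ ?_ ?_ ?_ ?_
  · intro x hx; simp only [Finset.mem_Ico] at hx ⊢; omega
  · intro x hx; simp only [Finset.mem_Ico] at hx ⊢; omega
  · intro x hx; simp only [Finset.mem_Ico] at hx; show a - (a - x) = x; omega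
  · intro x hx; simp only [Finset.mem_Ico] at hx; show a - (a - x) = x; omega
  · intro x hx; simp only [Finset.mem_Ico] at hx
    show h x = h (a - (a - x))
    exact congrArg h (by omega)

def Nd (a b : ℕ) (p : ℕ → ℕ → Prop) [∀ j k, Decidable (p j k)] : ℤ :=
  ∑ j ∈ Ico 1 a, ∑ k ∈ Ico 1 b, if p j k then (1:ℤ) else 0

lemma Nd_congr (a b : ℕ) (p q : ℕ → ℕ → Prop) [∀ j k, Decidable (p j k)] [∀ j k, Decidable (q j k)]
    (h : ∀ j ∈ Ico 1 a, ∀ k ∈ Ico 1 b, (p j k ↔ q j k)) : Nd a b p = Nd a b q := by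
  unfold Nd
  refine Finset.sum_congr rfl fun j hj => Finset.sum_congr rfl fun k hk => ?_
  have := h j hj k hk
  split_ifs with h1 h2
  · rfl
  · exact absurd (this.1 h1) h2
  · exact absurd (this.2 ‹_›) h1
  · rfl

lemma Nd_reflect (a b : ℕ) (p : ℕ → ℕ → Prop) [∀ j k, Decidable (p j k)] :
    Nd a b p = Nd a b (fun j k => p (a-j) (b-k)) := by
  unfold Nd
  rw [sum_reflect a (fun j => ∑ k ∈ Ico 1 b, if p j k then (1:ℤ) else 0)]
  exact Finset.sum_congr rfl fun j _ => sum_reflect b (fun k => if p (a-j) k then (1:ℤ) else 0)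

lemma Nd_split (a b : ℕ) (p r : ℕ → ℕ → Prop) [∀ j k, Decidable (p j k)] [∀ j k, Decidable (r j k)] :
    Nd a b p = Nd a b (fun j k => p j k ∧ r j k) + Nd a b (fun j k => p j k ∧ ¬ r j k) := by
  unfold Nd
  rw [← Finset.sum_add_distrib]
  refine Finset.sum_congr rfl fun j hj => ?_
  rw [← Finset.sum_add_distrib]
  refine Finset.sum_congr rfl fun k hk => ?_
  by_cases h1 : p j k <;> by_cases h2 : r j k <;> simp [h1, h2]

lemma Nd_rect (a b : ℕ) (pj pk : ℕ → Prop) [∀ j, Decidable (pj j)] [∀ k, Decidable (pk k)] :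
    Nd a b (fun j k => pj j ∧ pk k)
      = (∑ j ∈ Ico 1 a, if pj j then (1:ℤ) else 0) * (∑ k ∈ Ico 1 b, if pk k then (1:ℤ) else 0) := by
  unfold Nd
  rw [Finset.sum_mul_sum]
  refine Finset.sum_congr rfl fun j hj => Finset.sum_congr rfl fun k hk => ?_
  by_cases h1 : pj j <;> by_cases h2 : pk k <;> simp [h1, h2]

lemma cnt_hi (n : ℕ) : (∑ j ∈ Ico 1 (2*n+1), if 2*n+1 < 2*j then (1:ℤ) else 0) = n := by
  rw [← Finset.sum_filter]
  have hf : (Ico 1 (2*n+1)).filter (fun j => 2*n+1 < 2*j) = Ico (n+1) (2*n+1) := by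
    ext j; simp only [Finset.mem_filter, Finset.mem_Ico]; omega
  rw [hf, Finset.sum_const, Nat.card_Ico, nsmul_eq_mul, mul_one]
  push_cast; ring_nf; omega
lemma cnt_lo (n : ℕ) : (∑ j ∈ Ico 1 (2*n+1), if 2*j < 2*n+1 then (1:ℤ) else 0) = n := by
  rw [← Finset.sum_filter]
  have hf : (Ico 1 (2*n+1)).filter (fun j => 2*j < 2*n+1) = Ico 1 (n+1) := by
    ext j; simp only [Finset.mem_filter, Finset.mem_Ico]; omega
  rw [hf, Finset.sum_const, Nat.card_Ico, nsmul_eq_mul, mul_one]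
  push_cast; ring_nf

lemma Wlem (n m : ℕ) (hab : Nat.Coprime (2*n+1) (2*m+1)) :
    (∑ k ∈ Ico 1 (2*m+1), if 2*m+1 < 2*k then (((2*n+1)*k/(2*m+1) : ℕ):ℤ) else 0)
    + (∑ j ∈ Ico 1 (2*n+1), if 2*n+1 < 2*j then (((2*m+1)*j/(2*n+1) : ℕ):ℤ) else 0)
    = 3*n*m := by
  set a := 2*n+1 with ha
  set b := 2*m+1 with hb
  have ha0 : 0 < a := by omega
  have hb0 : 0 < b := by omega
  -- express both W sums as Nd
  have hW1 : (∑ k ∈ Ico 1 b, if b < 2*k then ((a*k/b : ℕ):ℤ) else 0)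
      = Nd a b (fun j k => b < 2*k ∧ b*j < a*k) := by
    unfold Nd
    rw [Finset.sum_comm]
    refine Finset.sum_congr rfl fun k hk => ?_
    rw [Finset.mem_Ico] at hk
    have hfilt : (Ico 1 a).filter (fun j => b*j < a*k) = Ico 1 (a*k/b + 1) :=
      filt b a k hab.symm hb0 hk.1 hk.2
    by_cases hsp : b < 2*k
    · simp only [hsp, if_true, true_and]
      rw [← Finset.sum_filter, hfilt, Finset.sum_const, Nat.card_Ico, Nat.add_sub_cancel,
        nsmul_eq_mul, mul_one]
    · simp [hsp]
  have hW2 : (∑ j ∈ Ico 1 a, if a < 2*j then ((b*j/a : ℕ):ℤ) else 0)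
      = Nd a b (fun j k => a < 2*j ∧ a*k < b*j) := by
    unfold Nd
    refine Finset.sum_congr rfl fun j hj => ?_
    rw [Finset.mem_Ico] at hj
    have hfilt : (Ico 1 b).filter (fun k => a*k < b*j) = Ico 1 (b*j/a + 1) :=
      filt a b j hab ha0 hj.1 hj.2
    by_cases hsp : a < 2*j
    · simp only [hsp, if_true, true_and]
      rw [← Finset.sum_filter, hfilt, Finset.sum_const, Nat.card_Ico, Nat.add_sub_cancel,
        nsmul_eq_mul, mul_one]
    · simp [hsp]
  rw [hW1, hW2]
  -- pointwise arithmetic facts on the grid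
  have harith : ∀ j ∈ Ico 1 a, ∀ k ∈ Ico 1 b,
      ((b*(a-j) < a*(b-k)) ↔ (a*k < b*j)) ∧ ((a*(b-k) < b*(a-j)) ↔ (b*j < a*k)) := by
    intro j hj k hk
    rw [Finset.mem_Ico] at hj hk
    zify [hj.2.le, hk.2.le]
    constructor
    · constructor <;> intro h <;> nlinarith [h]
    · constructor <;> intro h <;> nlinarith [h]
  have hne : ∀ j ∈ Ico 1 a, ∀ k ∈ Ico 1 b, a*k ≠ b*j := by
    intro j hj k hk
    rw [Finset.mem_Ico] at hj hk
    exact tricho a b j k hab hk.1 hk.2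
  have himp : ∀ j ∈ Ico 1 a, ∀ k ∈ Ico 1 b, (a < 2*j → 2*k < b → a*k < b*j) := by
    intro j hj k hk h1 h2
    rw [Finset.mem_Ico] at hj hk
    nlinarith [h1, h2]
  -- c1 : reflect first sum
  have c1 : Nd a b (fun j k => b < 2*k ∧ b*j < a*k) = Nd a b (fun j k => 2*k < b ∧ a*k < b*j) := by
    rw [Nd_reflect]
    refine Nd_congr a b _ _ ?_
    intro j hj k hk
    have h1 := harith j hj k hk
    rw [Finset.mem_Ico] at hj hk
    constructor
    · rintro ⟨hx, hy⟩
      exact ⟨by omega, h1.1.mp hy⟩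
    · rintro ⟨hx, hy⟩
      exact ⟨by omega, h1.1.mpr hy⟩
  have c2 := Nd_split a b (fun j k => 2*k < b ∧ a*k < b*j) (fun j k => a < 2*j)
  have c3 : Nd a b (fun j k => (2*k < b ∧ a*k < b*j) ∧ a < 2*j)
      = Nd a b (fun j k => a < 2*j ∧ 2*k < b) := by
    refine Nd_congr a b _ _ ?_
    intro j hj k hk
    constructor
    · rintro ⟨⟨h1, h2⟩, h3⟩; exact ⟨h3, h1⟩
    · rintro ⟨h3, h1⟩; exact ⟨⟨h1, himp j hj k hk h3 h1⟩, h3⟩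
  have c4 : Nd a b (fun j k => (2*k < b ∧ a*k < b*j) ∧ ¬ (a < 2*j))
      = Nd a b (fun j k => (a < 2*j ∧ b < 2*k) ∧ b*j < a*k) := by
    rw [Nd_reflect]
    refine Nd_congr a b _ _ ?_
    intro j hj k hk
    have h1 := harith j hj k hk
    rw [Finset.mem_Ico] at hj hk
    constructor
    · rintro ⟨⟨hx, hy⟩, hz⟩
      refine ⟨⟨by omega, by omega⟩, h1.2.mp hy⟩
    · rintro ⟨⟨hx, hy⟩, hz⟩
      refine ⟨⟨by omega, h1.2.mpr hz⟩, by omega⟩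
  have c5 := Nd_split a b (fun j k => a < 2*j ∧ a*k < b*j) (fun j k => b < 2*k)
  have c6 : Nd a b (fun j k => (a < 2*j ∧ a*k < b*j) ∧ ¬ (b < 2*k))
      = Nd a b (fun j k => a < 2*j ∧ 2*k < b) := by
    refine Nd_congr a b _ _ ?_
    intro j hj k hk
    rw [Finset.mem_Ico] at hj hk
    constructor
    · rintro ⟨⟨h1, h2⟩, h3⟩; exact ⟨h1, by omega⟩
    · rintro ⟨h1, h2⟩
      exact ⟨⟨h1, himp j (by rw [Finset.mem_Ico]; omega) k (by rw [Finset.mem_Ico]; omega) h1 h2⟩, by omega⟩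
  have c7 : Nd a b (fun j k => (a < 2*j ∧ a*k < b*j) ∧ b < 2*k)
      = Nd a b (fun j k => (a < 2*j ∧ b < 2*k) ∧ a*k < b*j) := by
    refine Nd_congr a b _ _ ?_
    intro j hj k hk
    constructor
    · rintro ⟨⟨h1, h2⟩, h3⟩; exact ⟨⟨h1, h3⟩, h2⟩
    · rintro ⟨⟨h1, h3⟩, h2⟩; exact ⟨⟨h1, h2⟩, h3⟩
  have c8 := Nd_split a b (fun j k => a < 2*j ∧ b < 2*k) (fun j k => a*k < b*j)
  have c9 : Nd a b (fun j k => (a < 2*j ∧ b < 2*k) ∧ ¬ (a*k < b*j))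
      = Nd a b (fun j k => (a < 2*j ∧ b < 2*k) ∧ b*j < a*k) := by
    refine Nd_congr a b _ _ ?_
    intro j hj k hk
    have h1 := hne j hj k hk
    constructor
    · rintro ⟨hx, hy⟩; exact ⟨hx, by omega⟩
    · rintro ⟨hx, hy⟩; exact ⟨hx, by omega⟩
  have r1 : Nd a b (fun j k => a < 2*j ∧ 2*k < b) = (n:ℤ)*(m:ℤ) := by
    rw [Nd_rect a b (fun j => a < 2*j) (fun k => 2*k < b), ha, hb, cnt_hi n, cnt_lo m]
  have r2 : Nd a b (fun j k => a < 2*j ∧ b < 2*k) = (n:ℤ)*(m:ℤ) := by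
    rw [Nd_rect a b (fun j => a < 2*j) (fun k => b < 2*k), ha, hb, cnt_hi n, cnt_hi m]
  rw [c1, c2, c3, c4, c5, c6, c7, r1]
  rw [c9] at c8
  linarith [c8, r2]

def Xs (a b : ℕ) : ℤ := ∑ k ∈ Ico 1 b, if b < 2*k then ((a*k % b : ℕ):ℤ) else 0
def Ts (b : ℕ) : ℤ := ∑ k ∈ Ico 1 b, if b < 2*k then (k:ℤ) else 0
def Ws (a b : ℕ) : ℤ := ∑ k ∈ Ico 1 b, if b < 2*k then ((a*k/b : ℕ):ℤ) else 0

lemma Xs_eq (a b : ℕ) : Xs a b = a * Ts b - b * Ws a b := by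
  unfold Xs Ts Ws
  rw [Finset.mul_sum, Finset.mul_sum, ← Finset.sum_sub_distrib]
  refine Finset.sum_congr rfl fun k _ => ?_
  by_cases hc : b < 2*k
  · simp only [hc, if_true]
    linear_combination -div_add_mod_int a b k
  · simp [hc]

lemma Ts_eq (m : ℕ) : 2 * Ts (2*m+1) = 3*(m:ℤ)^2 + m := by
  unfold Ts
  rw [← Finset.sum_filter]
  have hf : (Ico 1 (2*m+1)).filter (fun k => 2*m+1 < 2*k) = Ico (m+1) (2*m+1) := by
    ext k; simp only [Finset.mem_filter, Finset.mem_Ico]; omega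
  rw [hf]
  have hcons := Finset.sum_Ico_consecutive (fun k => (k:ℤ)) (by omega : 1 ≤ m+1) (by omega : m+1 ≤ 2*m+1)
  have g1 := gauss1 (2*m+1)
  have g2 := gauss1 (m+1)
  push_cast at g1 g2 ⊢
  linarith [hcons, g1, g2]

lemma Vv_eq (a m : ℕ) (hab : Nat.Coprime a (2*m+1)) :
    Vv a (2*m+1) = ((Xs a (2*m+1) : ℤ):ℝ)/(2*m+1:ℝ) - (m:ℝ)/2 := by
  set b := 2*m+1 with hbm
  have hb0 : 0 < b := by omega
  unfold Vv
  have hpt : ∀ k ∈ Ico 1 b, (if b < 2*k then saw ((a:ℝ)*k/b) else 0)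
      = (if b < 2*k then ((a*k % b : ℕ):ℝ) else 0)/(b:ℝ)
        - (if b < 2*k then (1:ℝ) else 0)/2 := by
    intro k hk
    rw [Finset.mem_Ico] at hk
    rw [saw_ak_div a b k hab hk.1 hk.2]
    by_cases hc : b < 2*k
    · simp only [hc, if_true]
      try ring
    · simp [hc]
  rw [Finset.sum_congr rfl hpt, Finset.sum_sub_distrib, ← Finset.sum_div, ← Finset.sum_div]
  have hX : ((Xs a b : ℤ):ℝ) = ∑ k ∈ Ico 1 b, (if b < 2*k then ((a*k % b : ℕ):ℝ) else 0) := by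
    unfold Xs; push_cast; rfl
  have hcnt : (∑ k ∈ Ico 1 b, if b < 2*k then (1:ℝ) else 0) = (m:ℝ) := by
    have h1 : (∑ k ∈ Ico 1 b, if b < 2*k then (1:ℝ) else 0)
        = (((∑ k ∈ Ico 1 b, if b < 2*k then (1:ℤ) else 0) : ℤ):ℝ) := by push_cast; rfl
    rw [h1, hbm, cnt_hi m]
    norm_cast
  rw [← hX, hcnt]
  have hbb : ((b:ℕ):ℝ) = (2*m+1:ℝ) := by rw [hbm]; push_cast; ring
  rw [hbb]

lemma VVlem (n m : ℕ) (hab : Nat.Coprime (2*n+1) (2*m+1)) :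
    Vv (2*n+1) (2*m+1) + Vv (2*m+1) (2*n+1)
      = (((2*n+1:ℕ):ℝ)^2 + ((2*m+1:ℕ):ℝ)^2)/(8*((2*n+1:ℕ):ℝ)*((2*m+1:ℕ):ℝ)) - 1/4 := by
  rw [Vv_eq (2*n+1) m hab, Vv_eq (2*m+1) n hab.symm]
  have hX1 := Xs_eq (2*n+1) (2*m+1)
  have hX2 := Xs_eq (2*m+1) (2*n+1)
  have hT1 := Ts_eq m
  have hT2 := Ts_eq n
  have hW := Wlem n m hab
  -- move to ℝ
  have hX1' : ((Xs (2*n+1) (2*m+1) : ℤ):ℝ)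
      = (2*(n:ℝ)+1) * ((Ts (2*m+1) : ℤ):ℝ) - (2*(m:ℝ)+1) * ((Ws (2*n+1) (2*m+1) : ℤ):ℝ) := by
    exact_mod_cast congrArg (Int.cast : ℤ → ℝ) hX1
  have hX2' : ((Xs (2*m+1) (2*n+1) : ℤ):ℝ)
      = (2*(m:ℝ)+1) * ((Ts (2*n+1) : ℤ):ℝ) - (2*(n:ℝ)+1) * ((Ws (2*m+1) (2*n+1) : ℤ):ℝ) := by
    exact_mod_cast congrArg (Int.cast : ℤ → ℝ) hX2
  have hT1' : 2 * ((Ts (2*m+1) : ℤ):ℝ) = 3*(m:ℝ)^2 + m := by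
    exact_mod_cast congrArg (Int.cast : ℤ → ℝ) hT1
  have hT2' : 2 * ((Ts (2*n+1) : ℤ):ℝ) = 3*(n:ℝ)^2 + n := by
    exact_mod_cast congrArg (Int.cast : ℤ → ℝ) hT2
  have hW' : ((Ws (2*n+1) (2*m+1) : ℤ):ℝ) + ((Ws (2*m+1) (2*n+1) : ℤ):ℝ) = 3*(n:ℝ)*(m:ℝ) := by
    have : (Ws (2*n+1) (2*m+1) : ℤ) + (Ws (2*m+1) (2*n+1) : ℤ) = 3*(n:ℤ)*m := hW
    exact_mod_cast congrArg (Int.cast : ℤ → ℝ) this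
  have ht1 : ((Ts (2*m+1) : ℤ):ℝ) = (3*(m:ℝ)^2 + m)/2 := by linarith
  have ht2 : ((Ts (2*n+1) : ℤ):ℝ) = (3*(n:ℝ)^2 + n)/2 := by linarith
  have hw2 : ((Ws (2*m+1) (2*n+1) : ℤ):ℝ) = 3*(n:ℝ)*(m:ℝ) - ((Ws (2*n+1) (2*m+1) : ℤ):ℝ) := by
    linarith
  rw [hX1', hX2', ht1, ht2, hw2]
  have hc1 : (((2*n+1:ℕ)):ℝ) = 2*(n:ℝ)+1 := by push_cast; ring
  have hc2 : (((2*m+1:ℕ)):ℝ) = 2*(m:ℝ)+1 := by push_cast; ring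
  rw [hc1, hc2]
  have hd1 : (0:ℝ) < 2*(n:ℝ)+1 := by positivity
  have hd2 : (0:ℝ) < 2*(m:ℝ)+1 := by positivity
  field_simp
  ring

lemma saw_one : saw 1 = 0 := by
  rw [saw_eq, if_pos]
  rw [show (1:ℝ) = ((1:ℤ):ℝ) by norm_num, Int.fract_intCast]

lemma dede_s1 (x : ℤ) (b : ℕ) (hb : 0 < b) : dedekindSum x b = s1 x b := by
  unfold dedekindSum s1
  rw [← Finset.Ico_add_one_right_eq_Icc, Finset.sum_Ico_succ_top (by omega : 1 ≤ b)]
  have hb' : (b:ℝ) ≠ 0 := by positivity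
  rw [show ((b:ℕ):ℝ)/(b:ℝ) = 1 by field_simp, saw_one]
  ring

theorem stmt_2 (a b : ℕ) (ha : 0 < a) (hb : 0 < b) (hodda : Odd a) (hoddb : Odd b)
    (hab : Nat.Coprime a b) (astar bstar : ℤ)
    (hastar : (a : ℤ) * astar ≡ 1 [ZMOD (b : ℤ)])
    (hbstar : (b : ℤ) * bstar ≡ 1 [ZMOD (a : ℤ)]) :
    S (2 * astar) b + S (2 * bstar) a =
      ((a : ℝ) ^ 2 + (b : ℝ) ^ 2 + 4) / (2 * (a : ℝ) * b) - 3 := by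
  have hca : (b:ℤ) ∣ ((a:ℤ)*(2*astar) - 2) := by
    obtain ⟨t, ht⟩ := hastar.dvd
    exact ⟨-2*t, by linear_combination -2*ht⟩
  have hcb : (a:ℤ) ∣ ((b:ℤ)*(2*bstar) - 2) := by
    obtain ⟨t, ht⟩ := hbstar.dvd
    exact ⟨-2*t, by linear_combination -2*ht⟩
  have hd1 := doubling a b hb hoddb hab (2*astar) hca
  have hd2 := doubling b a ha hodda hab.symm (2*bstar) hcb
  have hrec := recip a b ha hb hab
  obtain ⟨n, hn⟩ := hodda
  obtain ⟨m, hm⟩ := hoddb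
  have hVV : Vv a b + Vv b a = ((a:ℝ)^2 + (b:ℝ)^2)/(8*(a:ℝ)*(b:ℝ)) - 1/4 := by
    subst hn hm
    exact VVlem n m hab
  unfold S
  rw [dede_s1 _ b hb, dede_s1 _ a ha, hd1, hd2]
  have hA : (0:ℝ) < a := by exact_mod_cast ha
  have hB : (0:ℝ) < b := by exact_mod_cast hb
  rw [show 12 * (2*s1 (↑a) b - Vv a b) + 12 * (2*s1 (↑b) a - Vv b a)
      = 24*(s1 (↑a) b + s1 (↑b) a) - 12*(Vv a b + Vv b a) by ring, hrec, hVV]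
  field_simp
  ring
end
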